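/- arXiv:2002.11938 — 5 statements merged into one kernel-verified Lean document; each statement's English description precedes it below -/
import Mathlib

section
/- Let d ≥ 1 and c > 0 be constants, and for each N let G_N be a connected d-regular simple graph on N vertices with Cheeger constant h(G_N) ≥ c, with Laplacian L_N whose eigenvalues are ordered 0 = λ₁ ≤ λ₂(N) ≤ … ≤ λ_N(N), and let L̄_N be the grounded Laplacian obtained from L_N by deleting the row and column of some vertex v_N, with smallest eigenvalue λ̄₁(N). Then there exists a network size N̄ such that for all N > N̄ one has λ₂(N) > λ̄₁(N). -/
open Matrix

/-- The `k`-th smallest eigenvalue (0-indexed, counted with multiplicity) of a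
real Hermitian (symmetric) matrix; junk value `0` if `M` is not Hermitian or
`k` is out of range. -/
noncomputable def eigVal {n : Type*} [Fintype n] [DecidableEq n]
    (M : Matrix n n ℝ) (k : ℕ) : ℝ := by
  classical
  exact if h : M.IsHermitian ∧ k < Fintype.card n then
    (h.1.eigenvalues₀ ∘ Tuple.sort h.1.eigenvalues₀) ⟨k, h.2⟩
  else 0

/-- The grounded matrix obtained from `M` by deleting the row and the column
indexed by the vertex `v`. -/
def ground {N : ℕ} (M : Matrix (Fin N) (Fin N) ℝ) (v : Fin N) :
    Matrix {i : Fin N // i ≠ v} {i : Fin N // i ≠ v} ℝ :=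
  M.submatrix (fun i => i.1) (fun i => i.1)

/-- The (real) Laplacian matrix of a simple graph. -/
noncomputable def lap {N : ℕ} (G : SimpleGraph (Fin N)) : Matrix (Fin N) (Fin N) ℝ := by
  classical
  exact G.lapMatrix ℝ

/-- The degree of the vertex `v` in `G`. -/
noncomputable def deg {N : ℕ} (G : SimpleGraph (Fin N)) (v : Fin N) : ℕ := by
  classical
  exact (Finset.univ.filter fun u => G.Adj v u).card

/-- The Cheeger (isoperimetric) constant of a graph: the infimum of
`|∂X|/|X|` over nonempty vertex sets `X` with `|X| ≤ N/2`, where `∂X` is the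
set of edges with exactly one endpoint in `X`. -/
noncomputable def cheeger {N : ℕ} (G : SimpleGraph (Fin N)) : ℝ := by
  classical
  exact sInf {r : ℝ | ∃ X : Finset (Fin N), X.Nonempty ∧ (X.card : ℝ) ≤ (N : ℝ) / 2 ∧
    r = ((Finset.univ.filter fun p : Fin N × Fin N =>
      G.Adj p.1 p.2 ∧ p.1 ∈ X ∧ p.2 ∉ X).card : ℝ) / X.card}

section Aux

open Finset MeasureTheory

/-! ### Generic spectral facts -/

variable {n : Type*} [Fintype n] [DecidableEq n]

lemma aux_rayleigh_ge_min {M : Matrix n n ℝ} (hM : M.IsHermitian) {m : ℝ}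
    (hm : ∀ j, m ≤ hM.eigenvalues j) (x : n → ℝ) :
    m * (x ⬝ᵥ x) ≤ x ⬝ᵥ M *ᵥ x := by
  classical
  set U : Matrix n n ℝ := (hM.eigenvectorUnitary : Matrix n n ℝ) with hU
  have hUU : U * star U = 1 := (Matrix.mem_unitaryGroup_iff).mp hM.eigenvectorUnitary.2
  set w : n → ℝ := star U *ᵥ x with hw
  have hsU : star U = Uᵀ := by
    ext i j; simp [star, conjTranspose]
  have key : ∀ v : n → ℝ, x ⬝ᵥ U *ᵥ v = w ⬝ᵥ v := by
    intro v
    rw [dotProduct_mulVec, hw, hsU, ← vecMul_transpose, transpose_transpose]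
  have hspec := hM.spectral_theorem
  have hx2 : x ⬝ᵥ M *ᵥ x = w ⬝ᵥ (diagonal hM.eigenvalues) *ᵥ w := by
    conv_lhs => rw [hspec]
    rw [Unitary.conjStarAlgAut_apply, ← hU, ← mulVec_mulVec, ← mulVec_mulVec, key]
    congr 1
  have hxx : w ⬝ᵥ w = x ⬝ᵥ x := by
    rw [hw]
    conv_lhs => rw [← key]
    rw [mulVec_mulVec, hUU, one_mulVec]
  calc m * (x ⬝ᵥ x) = ∑ i, m * (w i * w i) := by
        rw [← hxx]; simp [dotProduct, Finset.mul_sum]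
    _ ≤ ∑ i, hM.eigenvalues i * (w i * w i) := by
        apply Finset.sum_le_sum
        intro i _
        exact mul_le_mul_of_nonneg_right (hm i) (mul_self_nonneg _)
    _ = w ⬝ᵥ (diagonal hM.eigenvalues) *ᵥ w := by
        simp only [dotProduct, mulVec_diagonal]
        apply Finset.sum_congr rfl; intros; ring
    _ = x ⬝ᵥ M *ᵥ x := hx2.symm

variable {M : Matrix n n ℝ}

lemma aux_eigVal_eq (hM : M.IsHermitian) {k : ℕ} (hk : k < Fintype.card n) :
    eigVal M k = (hM.eigenvalues₀ ∘ Tuple.sort hM.eigenvalues₀) ⟨k, hk⟩ := by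
  rw [eigVal, dif_pos ⟨hM, hk⟩]

lemma aux_eigenvalues_eq_comp (hM : M.IsHermitian) (i : n) :
    hM.eigenvalues i
      = hM.eigenvalues₀ ((Fintype.equivOfCardEq (Fintype.card_fin (Fintype.card n))).symm i) :=
  rfl

lemma aux_eigVal_zero_le (hM : M.IsHermitian) (hn : 0 < Fintype.card n) (j : n) :
    eigVal M 0 ≤ hM.eigenvalues j := by
  rw [aux_eigVal_eq hM hn, aux_eigenvalues_eq_comp]
  set σ := Tuple.sort hM.eigenvalues₀
  set i := (Fintype.equivOfCardEq (Fintype.card_fin (Fintype.card n))).symm j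
  have : hM.eigenvalues₀ i = (hM.eigenvalues₀ ∘ σ) (σ.symm i) := by simp [σ]
  rw [this]
  exact Tuple.monotone_sort hM.eigenvalues₀ (by simp [Fin.le_def])

lemma aux_eigVal_exists_indices (hM : M.IsHermitian) (hn : 1 < Fintype.card n) :
    ∃ j₀ j₁ : n, j₀ ≠ j₁ ∧ hM.eigenvalues j₀ = eigVal M 0 ∧
      hM.eigenvalues j₁ = eigVal M 1 := by
  have h0 : (0 : ℕ) < Fintype.card n := by omega
  set e := Fintype.equivOfCardEq (Fintype.card_fin (Fintype.card n))
  set σ := Tuple.sort hM.eigenvalues₀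
  refine ⟨e (σ ⟨0, h0⟩), e (σ ⟨1, hn⟩), ?_, ?_, ?_⟩
  · intro h
    have := σ.injective (e.injective h)
    simp [Fin.ext_iff] at this
  · rw [aux_eigenvalues_eq_comp, aux_eigVal_eq hM h0]; simp [e, σ]
  · rw [aux_eigenvalues_eq_comp, aux_eigVal_eq hM hn]; simp [e, σ]

/-! ### Graph-specific facts -/

variable {N : ℕ} (G : SimpleGraph (Fin N)) [inst : DecidableRel G.Adj]

lemma aux_lap_eq : lap G = G.lapMatrix ℝ := by
  unfold lap
  congr!

lemma aux_deg_eq (v : Fin N) : deg G v = G.degree v := by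
  unfold deg
  rw [← SimpleGraph.card_neighborFinset_eq_degree]
  congr!
  · ext u; simp [SimpleGraph.mem_neighborFinset]

lemma aux_ground_isHermitian {M : Matrix (Fin N) (Fin N) ℝ} (hM : M.IsHermitian) (v : Fin N) :
    (ground M v).IsHermitian := by
  ext i j
  simpa [ground, Matrix.conjTranspose, Matrix.submatrix] using
    (congrFun (congrFun hM j.1) i.1).symm

lemma aux_card_ne (v : Fin N) : Fintype.card {i : Fin N // i ≠ v} = N - 1 := by
  simp [Fintype.card_subtype_compl]

lemma aux_sum_subtype_ne {α : Type} [AddCommMonoid α] (v : Fin N) (f : Fin N → α) :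
    ∑ i : {i : Fin N // i ≠ v}, f i.1 = ∑ i ∈ Finset.univ.erase v, f i := by
  rw [Finset.sum_subtype (p := fun i => i ≠ v) (Finset.univ.erase v) (fun x => by simp) f]

lemma aux_quad_ground (hG : ∀ i, (G.lapMatrix ℝ *ᵥ fun _ => (1:ℝ)) i = 0) (v : Fin N) :
    (fun _ => (1:ℝ)) ⬝ᵥ (ground (G.lapMatrix ℝ) v) *ᵥ (fun _ => (1:ℝ))
      = G.lapMatrix ℝ v v := by
  classical
  have rowsum : ∀ i, ∑ j, G.lapMatrix ℝ i j = 0 := by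
    intro i
    simpa [Matrix.mulVec, dotProduct] using hG i
  have colsum : ∑ i, G.lapMatrix ℝ i v = 0 := by
    have hsym : ∀ i j, G.lapMatrix ℝ i j = G.lapMatrix ℝ j i := by
      intro i j
      exact ((SimpleGraph.isSymm_lapMatrix G (R := ℝ)).apply j i)
    calc ∑ i, G.lapMatrix ℝ i v = ∑ i, G.lapMatrix ℝ v i := by
          exact Finset.sum_congr rfl fun i _ => hsym i v
      _ = 0 := rowsum v
  have : (fun _ => (1:ℝ)) ⬝ᵥ (ground (G.lapMatrix ℝ) v) *ᵥ (fun _ => (1:ℝ))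
      = ∑ i : {i : Fin N // i ≠ v}, ∑ j : {i : Fin N // i ≠ v},
          G.lapMatrix ℝ i.1 j.1 := by
    simp [dotProduct, Matrix.mulVec, ground, Matrix.submatrix]
  rw [this]
  have inner : ∀ i : Fin N, ∑ j : {i : Fin N // i ≠ v}, G.lapMatrix ℝ i j.1
      = - G.lapMatrix ℝ i v := by
    intro i
    rw [aux_sum_subtype_ne v (fun j => G.lapMatrix ℝ i j),
      Finset.sum_erase_eq_sub (Finset.mem_univ v), rowsum i]
    ring
  calc ∑ i : {i : Fin N // i ≠ v}, ∑ j : {i : Fin N // i ≠ v}, G.lapMatrix ℝ i.1 j.1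
      = ∑ i : {i : Fin N // i ≠ v}, - G.lapMatrix ℝ i.1 v := by
        exact Finset.sum_congr rfl fun i _ => inner i.1
    _ = - ∑ i ∈ Finset.univ.erase v, G.lapMatrix ℝ i v := by
        rw [aux_sum_subtype_ne v (fun i => - G.lapMatrix ℝ i v)]; simp
    _ = G.lapMatrix ℝ v v := by
        rw [Finset.sum_erase_eq_sub (Finset.mem_univ v), colsum]; ring

lemma aux_lap_diag (v : Fin N) : G.lapMatrix ℝ v v = G.degree v := by
  simp [SimpleGraph.lapMatrix, SimpleGraph.degMatrix, SimpleGraph.adjMatrix]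

/-! ### Cheeger constant facts -/

lemma aux_cheeger_le (X : Finset (Fin N)) (hX : X.Nonempty)
    (hX2 : (X.card : ℝ) ≤ (N : ℝ) / 2) :
    cheeger G * X.card ≤ ((Finset.univ.filter fun p : Fin N × Fin N =>
      G.Adj p.1 p.2 ∧ p.1 ∈ X ∧ p.2 ∉ X).card : ℝ) := by
  have hXpos : (0 : ℝ) < X.card := by exact_mod_cast Finset.card_pos.mpr hX
  have key : cheeger G ≤ ((Finset.univ.filter fun p : Fin N × Fin N =>
      G.Adj p.1 p.2 ∧ p.1 ∈ X ∧ p.2 ∉ X).card : ℝ) / X.card := by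
    unfold cheeger
    refine csInf_le ⟨0, fun r hr => ?_⟩ ⟨X, hX, hX2, by congr!⟩
    obtain ⟨Y, hY, hY2, rfl⟩ := hr
    positivity
  calc cheeger G * X.card ≤ (((Finset.univ.filter fun p : Fin N × Fin N =>
        G.Adj p.1 p.2 ∧ p.1 ∈ X ∧ p.2 ∉ X).card : ℝ) / X.card) * X.card :=
        mul_le_mul_of_nonneg_right key hXpos.le
    _ = _ := by field_simp

lemma aux_ind_integrable (a b : ℝ) :
    Integrable (Set.indicator (Set.Ico a b) (fun _ => (1:ℝ))) := by
  rw [integrable_indicator_iff measurableSet_Ico]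
  exact integrableOn_const (by rw [Real.volume_Ico]; exact ENNReal.ofReal_ne_top)

lemma aux_ind_integral (a b : ℝ) :
    ∫ t, Set.indicator (Set.Ico a b) (fun _ => (1:ℝ)) t = max (b - a) 0 := by
  rw [MeasureTheory.integral_indicator_const (1:ℝ) measurableSet_Ico]
  rw [Real.volume_real_Ico]
  simp [max_def]

lemma aux_coarea {c : ℝ} (hc : 0 < c) (hch : c ≤ cheeger G) (z : Fin N → ℝ)
    (hz : ∀ i, 0 ≤ z i)
    (hsupp : (((Finset.univ.filter fun i => 0 < z i)).card : ℝ) ≤ (N : ℝ) / 2) :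
    c * ∑ i, z i ≤ ∑ p ∈ Finset.univ.filter (fun p : Fin N × Fin N => G.Adj p.1 p.2),
      max (z p.1 - z p.2) 0 := by
  classical
  set P := Finset.univ.filter (fun p : Fin N × Fin N => G.Adj p.1 p.2) with hP
  set gfun : ℝ → ℝ := fun t => ∑ i, Set.indicator (Set.Ico 0 (z i)) (fun _ => (1:ℝ)) t
    with hgfun
  set ffun : ℝ → ℝ := fun t => ∑ p ∈ P, Set.indicator (Set.Ico (z p.2) (z p.1))
    (fun _ => (1:ℝ)) t with hffun
  have hg_int : Integrable gfun := integrable_finset_sum _ (fun i _ => aux_ind_integrable _ _)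
  have hf_int : Integrable ffun := integrable_finset_sum _ (fun p _ => aux_ind_integrable _ _)
  have hgint : ∫ t, gfun t = ∑ i, z i := by
    rw [hgfun, integral_finset_sum _ (fun i _ => aux_ind_integrable _ _)]
    refine Finset.sum_congr rfl fun i _ => ?_
    rw [aux_ind_integral]
    simp [hz i]
  have hfint : ∫ t, ffun t = ∑ p ∈ P, max (z p.1 - z p.2) 0 := by
    rw [hffun, integral_finset_sum _ (fun p _ => aux_ind_integrable _ _)]
    exact Finset.sum_congr rfl fun p _ => aux_ind_integral _ _
  have hpoint : ∀ t, c * gfun t ≤ ffun t := by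
    intro t
    rcases le_or_gt 0 t with ht | ht
    · set S := Finset.univ.filter (fun i => t < z i) with hS
      have hgt : gfun t = S.card := by
        rw [hgfun]
        simp only [Set.indicator_apply, Set.mem_Ico]
        rw [Finset.sum_boole]
        norm_cast
        congr 1
        apply Finset.filter_congr
        intro i _
        simp [ht]
      have hft : ffun t = ((Finset.univ.filter fun p : Fin N × Fin N =>
          G.Adj p.1 p.2 ∧ p.1 ∈ S ∧ p.2 ∉ S)).card := by
        rw [hffun]
        simp only [Set.indicator_apply, Set.mem_Ico]
        rw [Finset.sum_boole]
        norm_cast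
        congr 1
        rw [hP, Finset.filter_filter]
        apply Finset.filter_congr
        intro p _
        simp only [hS, Finset.mem_filter, Finset.mem_univ, true_and, not_lt]
        tauto
      rcases Finset.eq_empty_or_nonempty S with hSe | hSne
      · rw [hgt, hSe]
        simp only [Finset.card_empty, Nat.cast_zero, mul_zero]
        rw [hffun]
        apply Finset.sum_nonneg
        intro p _
        exact Set.indicator_nonneg (fun _ _ => zero_le_one) _
      · have hsub : S ⊆ Finset.univ.filter (fun i => 0 < z i) := by
          intro i hi
          simp only [hS, Finset.mem_filter] at hi ⊢
          exact ⟨hi.1, lt_of_le_of_lt ht hi.2⟩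
        have hcard : (S.card : ℝ) ≤ (N : ℝ) / 2 :=
          le_trans (by exact_mod_cast Finset.card_le_card hsub) hsupp
        have h1 := aux_cheeger_le G S hSne hcard
        have h2 : c * S.card ≤ cheeger G * S.card :=
          mul_le_mul_of_nonneg_right hch (by positivity)
        rw [hgt, hft]
        exact le_trans h2 h1
    · have hg0 : gfun t = 0 := by
        rw [hgfun]
        apply Finset.sum_eq_zero
        intro i _
        have hnt : ¬ (0 ≤ t) := not_le.mpr ht
        simp [Set.indicator_apply, Set.mem_Ico, hnt]
      rw [hg0, mul_zero, hffun]
      apply Finset.sum_nonneg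
      intro p _
      exact Set.indicator_nonneg (fun _ _ => zero_le_one) _
  calc c * ∑ i, z i = ∫ t, c * gfun t := by rw [MeasureTheory.integral_const_mul, hgint]
    _ ≤ ∫ t, ffun t := integral_mono (hg_int.const_mul c) hf_int hpoint
    _ = _ := hfint

lemma aux_pair_sum (f : Fin N → Fin N → ℝ) :
    ∑ p ∈ Finset.univ.filter (fun p : Fin N × Fin N => G.Adj p.1 p.2), f p.1 p.2
      = ∑ i, ∑ j ∈ G.neighborFinset i, f i j := by
  rw [Finset.sum_filter, Fintype.sum_prod_type]
  refine Finset.sum_congr rfl fun i _ => ?_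
  rw [← Finset.sum_filter]
  congr 1
  ext j
  simp [SimpleGraph.mem_neighborFinset]

lemma aux_pair_swap (f : Fin N × Fin N → ℝ) :
    ∑ p ∈ Finset.univ.filter (fun p : Fin N × Fin N => G.Adj p.1 p.2), f p
      = ∑ p ∈ Finset.univ.filter (fun p : Fin N × Fin N => G.Adj p.1 p.2), f p.swap := by
  apply Finset.sum_nbij' (fun p => p.swap) (fun p => p.swap) <;>
    simp +contextual [SimpleGraph.adj_comm]

/-- Discrete Cheeger inequality (hard direction) applied to an eigenvector of the
Laplacian orthogonal to the constants. -/
theorem aux_fiedler_lower {d : ℕ} (hd : 1 ≤ d) (hreg : ∀ u, G.degree u = d)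
    {c : ℝ} (hc : 0 < c) (hch : c ≤ cheeger G)
    (x : Fin N → ℝ) (hx0 : x ≠ 0) (hsum : ∑ i, x i = 0)
    (hhalf : (((Finset.univ.filter fun i => 0 < x i)).card : ℝ) ≤ (N : ℝ) / 2)
    {lam : ℝ} (hLx : G.lapMatrix ℝ *ᵥ x = lam • x) :
    c ^ 2 / (2 * d) ≤ lam := by
  classical
  set P := Finset.univ.filter (fun p : Fin N × Fin N => G.Adj p.1 p.2) with hPdef
  set y : Fin N → ℝ := fun i => max (x i) 0 with hy
  set z : Fin N → ℝ := fun i => (y i) ^ 2 with hzdef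
  set T : ℝ := ∑ i, z i with hT
  have hy0 : ∀ i, 0 ≤ y i := fun i => le_max_right _ _
  have hzi : ∀ i, z i = y i ^ 2 := fun _ => rfl
  have hyx : ∀ i, y i * x i = z i := by
    intro i
    rcases le_or_gt (x i) 0 with h | h
    · simp [hy, hzdef, max_eq_right h]
    · simp [hy, hzdef, max_eq_left h.le]; ring
  have hz0 : ∀ i, 0 ≤ z i := fun i => sq_nonneg _
  have hzx : ∀ i, 0 < z i ↔ 0 < x i := by
    intro i
    constructor
    · intro h
      by_contra hcon
      push_neg at hcon
      rw [hzdef] at h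
      simp only [hy, max_eq_right hcon] at h
      simpa using h
    · intro h
      rw [hzdef]
      simp only [hy, max_eq_left h.le]
      positivity
  have hex : ∃ i, 0 < x i := by
    by_contra hcon
    push_neg at hcon
    have : ∀ i ∈ Finset.univ, x i = 0 := by
      intro i _
      have := (Finset.sum_eq_zero_iff_of_nonpos (fun i _ => hcon i)).1 hsum
      exact this i (Finset.mem_univ i)
    exact hx0 (funext fun i => this i (Finset.mem_univ i))
  have hTpos : 0 < T := by
    obtain ⟨i0, hi0⟩ := hex
    refine Finset.sum_pos' (fun i _ => hz0 i) ⟨i0, Finset.mem_univ i0, ?_⟩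
    exact (hzx i0).2 hi0
  set Q : ℝ := y ⬝ᵥ G.lapMatrix ℝ *ᵥ y with hQdef
  have hyxp : ∀ i, x i ≤ y i := fun i => le_max_left _ _
  have stepA : Q ≤ lam * T := by
    have h1 : y ⬝ᵥ (G.lapMatrix ℝ *ᵥ x) = lam * T := by
      rw [hLx, dotProduct_smul, smul_eq_mul]
      congr 1
      rw [hT]
      exact Finset.sum_congr rfl fun i _ => hyx i
    have h2 : Q ≤ y ⬝ᵥ (G.lapMatrix ℝ *ᵥ x) := by
      rw [hQdef]
      unfold dotProduct
      apply Finset.sum_le_sum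
      intro i _
      rcases le_or_gt (x i) 0 with h | h
      · have : y i = 0 := max_eq_right h
        simp [this]
      · have hyi : y i = x i := max_eq_left h.le
        apply mul_le_mul_of_nonneg_left _ (hy0 i)
        rw [SimpleGraph.lapMatrix_mulVec_apply, SimpleGraph.lapMatrix_mulVec_apply, hyi]
        have : ∑ u ∈ G.neighborFinset i, x u ≤ ∑ u ∈ G.neighborFinset i, y u :=
          Finset.sum_le_sum fun u _ => hyxp u
        linarith
    linarith
  have hQ0 : 0 ≤ Q := by
    have := (SimpleGraph.posSemidef_lapMatrix ℝ G).dotProduct_mulVec_nonneg y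
    simpa [hQdef] using this
  have hP1 : ∑ p ∈ P, (y p.1) ^ 2 = d * T := by
    rw [hPdef, aux_pair_sum G (fun i j => (y i) ^ 2)]
    rw [hT, Finset.mul_sum]
    refine Finset.sum_congr rfl fun i _ => ?_
    rw [Finset.sum_const, SimpleGraph.card_neighborFinset_eq_degree, hreg i, hzdef]
    simp [mul_comm]
  have hP2 : ∑ p ∈ P, (y p.2) ^ 2 = d * T := by
    rw [hPdef, aux_pair_swap G (fun p => (y p.2) ^ 2)]
    exact hP1
  have hQpair : Q = d * T - ∑ p ∈ P, y p.1 * y p.2 := by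
    rw [hPdef, aux_pair_sum G (fun i j => y i * y j), hQdef]
    unfold dotProduct
    have : ∀ i, y i * (G.lapMatrix ℝ *ᵥ y) i
        = d * z i - ∑ j ∈ G.neighborFinset i, y i * y j := by
      intro i
      rw [SimpleGraph.lapMatrix_mulVec_apply, hreg i, mul_sub, Finset.mul_sum, hzi i]
      congr 1
      ring
    rw [Finset.sum_congr rfl fun i _ => this i, Finset.sum_sub_distrib, ← Finset.mul_sum, ← hT]
  have hcross : ∑ p ∈ P, y p.1 * y p.2 ≤ d * T := by
    have : ∀ p ∈ P, y p.1 * y p.2 ≤ ((y p.1)^2 + (y p.2)^2)/2 := by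
      intro p _
      nlinarith [sq_nonneg (y p.1 - y p.2)]
    calc ∑ p ∈ P, y p.1 * y p.2 ≤ ∑ p ∈ P, ((y p.1)^2 + (y p.2)^2)/2 :=
          Finset.sum_le_sum this
      _ = d * T := by rw [← Finset.sum_div, Finset.sum_add_distrib, hP1, hP2]; ring
  have hQ2 : ∑ p ∈ P, (y p.1 - y p.2) ^ 2 = 2 * Q := by
    have expand : ∀ p : Fin N × Fin N, (y p.1 - y p.2)^2
        = (y p.1)^2 + (y p.2)^2 - 2 * (y p.1 * y p.2) := by intro p; ring
    rw [Finset.sum_congr rfl fun p _ => expand p]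
    rw [Finset.sum_sub_distrib, Finset.sum_add_distrib, hP1, hP2, ← Finset.mul_sum, hQpair]
    ring
  have hS2 : ∑ p ∈ P, (y p.1 + y p.2) ^ 2 ≤ 4 * (d * T) := by
    have expand : ∀ p : Fin N × Fin N, (y p.1 + y p.2)^2
        = (y p.1)^2 + (y p.2)^2 + 2 * (y p.1 * y p.2) := by intro p; ring
    rw [Finset.sum_congr rfl fun p _ => expand p]
    rw [Finset.sum_add_distrib, Finset.sum_add_distrib, hP1, hP2, ← Finset.mul_sum]
    linarith
  set B : ℝ := ∑ p ∈ P, max (z p.1 - z p.2) 0 with hB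
  have hsupp : (((Finset.univ.filter fun i => 0 < z i)).card : ℝ) ≤ (N : ℝ) / 2 := by
    have : (Finset.univ.filter fun i => 0 < z i)
        = (Finset.univ.filter fun i => 0 < x i) := by
      apply Finset.filter_congr
      intro i _
      simp [hzx i]
    rw [this]; exact hhalf
  have hcT : c * T ≤ B := by
    rw [hB, hT, hPdef]
    exact aux_coarea G hc hch z hz0 hsupp
  have h2B : 2 * B = ∑ p ∈ P, |z p.1 - z p.2| := by
    have habs : ∀ p : Fin N × Fin N, |z p.1 - z p.2|
        = max (z p.1 - z p.2) 0 + max (z p.2 - z p.1) 0 := by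
      intro p
      rcases le_total (z p.1) (z p.2) with h | h
      · rw [abs_of_nonpos (by linarith), max_eq_right (by linarith),
          max_eq_left (by linarith)]
        ring
      · rw [abs_of_nonneg (by linarith), max_eq_left (by linarith),
          max_eq_right (by linarith)]
        ring
    rw [Finset.sum_congr rfl fun p _ => habs p, Finset.sum_add_distrib]
    have : ∑ p ∈ P, max (z p.2 - z p.1) 0 = B := by
      rw [hB, hPdef, aux_pair_swap G (fun p => max (z p.1 - z p.2) 0)]
      rfl
    rw [this, hB]
    ring
  have habs_fact : ∀ p : Fin N × Fin N,
      |z p.1 - z p.2| = |y p.1 - y p.2| * (y p.1 + y p.2) := by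
    intro p
    have h1 : z p.1 - z p.2 = (y p.1 - y p.2) * (y p.1 + y p.2) := by
      rw [hzi p.1, hzi p.2]; ring
    rw [h1, abs_mul]
    congr 1
    exact abs_of_nonneg (by have := hy0 p.1; have := hy0 p.2; linarith)
  have hCS : (∑ p ∈ P, |z p.1 - z p.2|) ^ 2 ≤ (2 * Q) * (4 * (d * T)) := by
    calc (∑ p ∈ P, |z p.1 - z p.2|) ^ 2
        = (∑ p ∈ P, |y p.1 - y p.2| * (y p.1 + y p.2)) ^ 2 := by
          rw [Finset.sum_congr rfl fun p _ => habs_fact p]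
      _ ≤ (∑ p ∈ P, |y p.1 - y p.2| ^ 2) * (∑ p ∈ P, (y p.1 + y p.2) ^ 2) :=
          Finset.sum_mul_sq_le_sq_mul_sq P _ _
      _ ≤ (2 * Q) * (4 * (d * T)) := by
          have h1 : ∑ p ∈ P, |y p.1 - y p.2| ^ 2 = 2 * Q := by
            rw [← hQ2]
            exact Finset.sum_congr rfl fun p _ => sq_abs _
          rw [h1]
          apply mul_le_mul_of_nonneg_left hS2 (by linarith)
  have hdpos : (0:ℝ) < d := by exact_mod_cast Nat.lt_of_lt_of_le Nat.zero_lt_one hd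
  have hcTnn : 0 ≤ c * T := by positivity
  have h4 : (2 * B)^2 ≤ (2*Q) * (4 * (d*T)) := by rw [h2B]; exact hCS
  have h4' : B^2 ≤ (2 * (d:ℝ) * Q) * T := by nlinarith [h4]
  have h5 : (c*T)^2 ≤ B^2 := pow_le_pow_left₀ hcTnn hcT 2
  have hfin : c^2 * T ≤ 2 * (d:ℝ) * Q := by
    have e1 : (c^2 * T) * T ≤ (2 * (d:ℝ) * Q) * T := by
      calc (c^2 * T) * T = (c*T)^2 := by ring
        _ ≤ B^2 := h5
        _ ≤ (2 * (d:ℝ) * Q) * T := h4'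
    exact le_of_mul_le_mul_right e1 hTpos
  have h6 : 2 * (d:ℝ) * Q ≤ 2 * (d:ℝ) * (lam * T) :=
    mul_le_mul_of_nonneg_left stepA (by positivity)
  have h7 : c^2 ≤ lam * (2 * d) := by
    have e2 : c^2 * T ≤ (lam * (2 * (d:ℝ))) * T := by
      calc c^2 * T ≤ 2 * (d:ℝ) * Q := hfin
        _ ≤ 2 * (d:ℝ) * (lam * T) := h6
        _ = (lam * (2 * (d:ℝ))) * T := by ring
    calc c^2 = (c^2 * T) * T⁻¹ := by field_simp
      _ ≤ ((lam * (2 * (d:ℝ))) * T) * T⁻¹ :=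
          mul_le_mul_of_nonneg_right e2 (inv_nonneg.2 hTpos.le)
      _ = lam * (2 * (d:ℝ)) := by field_simp
  rw [div_le_iff₀ (by positivity)]
  exact h7

end Aux

/-- For constants `d ≥ 1` and `c > 0`, there is a network size `N̄`
such that for every `N > N̄`, every connected `d`-regular simple graph on `N`
vertices with Cheeger constant at least `c`, and every grounded vertex `v`, the
algebraic connectivity `λ₂` of the Laplacian strictly exceeds the smallest
eigenvalue `λ̄₁` of the grounded Laplacian. -/
theorem grounded_eigenvalue_lt_algebraic_connectivity_eventually
    (d : ℕ) (hd : 1 ≤ d) (c : ℝ) (hc : 0 < c) :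
    ∃ Nbar : ℕ, ∀ N : ℕ, N > Nbar →
      ∀ G : SimpleGraph (Fin N), G.Connected → (∀ u, deg G u = d) → c ≤ cheeger G →
        ∀ v : Fin N, eigVal (lap G) 1 > eigVal (ground (lap G) v) 0 := by
  classical
  refine ⟨⌈2 * (d:ℝ)^2 / c^2⌉₊ + 2, ?_⟩
  intro N hN G hconn hreg hch v
  letI : DecidableRel G.Adj := Classical.decRel _
  have hdpos : (0:ℝ) < d := by exact_mod_cast Nat.lt_of_lt_of_le Nat.zero_lt_one hd
  have hN3 : 3 ≤ N := by omega
  have hNR : 2 * (d:ℝ)^2 / c^2 < (N : ℝ) - 1 := by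
    have h1 : 2 * (d:ℝ)^2 / c^2 ≤ (⌈2 * (d:ℝ)^2 / c^2⌉₊ : ℝ) := Nat.le_ceil _
    have h2 : ((⌈2 * (d:ℝ)^2 / c^2⌉₊ + 2 : ℕ) : ℝ) ≤ (N : ℝ) - 1 := by
      have : (⌈2 * (d:ℝ)^2 / c^2⌉₊ + 2) + 1 ≤ N := hN
      have := Nat.cast_le (α := ℝ).2 this
      push_cast at this ⊢
      linarith
    push_cast at h2
    linarith
  have hreg' : ∀ u, G.degree u = d := fun u => by rw [← aux_deg_eq]; exact hreg u
  have hlap : lap G = G.lapMatrix ℝ := aux_lap_eq G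
  have hPSD : (lap G).PosSemidef := by
    rw [hlap]; exact SimpleGraph.posSemidef_lapMatrix ℝ G
  have hH : (lap G).IsHermitian := hPSD.1
  have hn1 : 1 < Fintype.card (Fin N) := by rw [Fintype.card_fin]; omega
  have hn0 : 0 < Fintype.card (Fin N) := by omega
  obtain ⟨j₀, j₁, hne, hj0, hj1⟩ := aux_eigVal_exists_indices hH hn1
  have hnonneg : ∀ j, 0 ≤ hH.eigenvalues j := fun j => hPSD.eigenvalues_nonneg j
  -- the smallest eigenvalue of the Laplacian is 0
  have hone : (fun _ : Fin N => (1:ℝ)) ⬝ᵥ (fun _ : Fin N => (1:ℝ)) = (N : ℝ) := by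
    simp [dotProduct]
  have hL1 : lap G *ᵥ (fun _ : Fin N => (1:ℝ)) = 0 := by
    rw [hlap]
    ext i
    rw [SimpleGraph.lapMatrix_mulVec_apply]
    have hsum : ∑ u ∈ G.neighborFinset i, (1:ℝ) = (G.degree i : ℝ) := by
      rw [Finset.sum_const, SimpleGraph.card_neighborFinset_eq_degree]
      simp
    rw [hsum]
    simp
  have hmin0 : eigVal (lap G) 0 ≤ 0 := by
    have := aux_rayleigh_ge_min hH (aux_eigVal_zero_le hH hn0) (fun _ : Fin N => (1:ℝ))
    rw [hL1, hone] at this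
    simp only [dotProduct_zero] at this
    nlinarith [this, (by positivity : (0:ℝ) < (N:ℝ))]
  have hev0 : hH.eigenvalues j₀ = 0 := le_antisymm (hj0 ▸ hmin0) (hnonneg j₀)
  -- eigenvector for the zero eigenvalue is constant
  set u0 : Fin N → ℝ := ⇑(hH.eigenvectorBasis j₀) with hu0def
  set u1 : Fin N → ℝ := ⇑(hH.eigenvectorBasis j₁) with hu1def
  have hu0 : lap G *ᵥ u0 = 0 := by
    have := hH.mulVec_eigenvectorBasis j₀
    rw [hev0] at this
    simpa using this
  have hconst : ∀ i j : Fin N, u0 i = u0 j := by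
    have h0 : Matrix.toLin' (G.lapMatrix ℝ) u0 = 0 := by
      rw [Matrix.toLin'_apply, ← hlap, hu0]
    exact fun i j =>
      (SimpleGraph.lapMatrix_mulVec_eq_zero_iff_forall_reachable G).1 h0 i j
        (hconn.preconnected i j)
  have hu0ne : ∃ i, u0 i ≠ 0 := by
    by_contra hcon
    push_neg at hcon
    have hcon' : ∀ i, (hH.eigenvectorBasis j₀) i = 0 := hcon
    have hnorm := hH.eigenvectorBasis.orthonormal.1 j₀
    rw [EuclideanSpace.norm_eq] at hnorm
    simp only [hcon'] at hnorm
    norm_num at hnorm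
  -- orthogonality gives that u1 sums to zero
  have hsum1 : ∑ i, u1 i = 0 := by
    obtain ⟨i0, hi0⟩ := hu0ne
    have horth : ∑ i, u0 i * u1 i = 0 := by
      have h : (inner ℝ (hH.eigenvectorBasis j₀) (hH.eigenvectorBasis j₁) : ℝ) = 0 :=
        hH.eigenvectorBasis.orthonormal.2 hne
      rw [PiLp.inner_apply] at h
      simp at h
      rw [← h]; exact Finset.sum_congr rfl fun i _ => mul_comm _ _
    have hconst' : ∀ i, u0 i = u0 i0 := fun i => hconst i i0
    have : u0 i0 * ∑ i, u1 i = 0 := by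
      rw [Finset.mul_sum]
      rw [← horth]
      exact Finset.sum_congr rfl fun i _ => by rw [hconst' i]
    rcases mul_eq_zero.1 this with h | h
    · exact absurd h hi0
    · exact h
  have hu1ne : u1 ≠ 0 := by
    intro hcon
    have hcon' : ∀ i, (hH.eigenvectorBasis j₁) i = 0 := fun i => congrFun hcon i
    have hnorm := hH.eigenvectorBasis.orthonormal.1 j₁
    rw [EuclideanSpace.norm_eq] at hnorm
    simp only [hcon'] at hnorm
    norm_num at hnorm
  have hLu1 : G.lapMatrix ℝ *ᵥ u1 = hH.eigenvalues j₁ • u1 := by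
    rw [← hlap]
    exact hH.mulVec_eigenvectorBasis j₁
  -- sign choice to ensure positive support at most N/2
  have hdisj : Disjoint (Finset.univ.filter fun i => 0 < u1 i)
      (Finset.univ.filter fun i => 0 < (-u1) i) := by
    rw [Finset.disjoint_filter]
    intro i _ h1 h2
    have h2' : u1 i < 0 := by
      have : (0:ℝ) < -(u1 i) := h2
      linarith
    exact absurd h2' (not_lt.2 h1.le)
  have hcardsum : (Finset.univ.filter fun i => 0 < u1 i).card
      + (Finset.univ.filter fun i => 0 < (-u1) i).card ≤ N := by
    rw [← Finset.card_union_of_disjoint hdisj]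
    calc _ ≤ (Finset.univ : Finset (Fin N)).card := Finset.card_le_card (Finset.subset_univ _)
      _ = N := by simp
  have hmain : c ^ 2 / (2 * d) ≤ hH.eigenvalues j₁ := by
    rcases le_or_gt (2 * (Finset.univ.filter fun i => 0 < u1 i).card) N with hhalf | hhalf
    · refine aux_fiedler_lower G hd hreg' hc hch u1 hu1ne hsum1 ?_ hLu1
      have := (Nat.cast_le (α := ℝ)).2 hhalf
      push_cast at this
      linarith
    · have hx0 : (-u1) ≠ 0 := by
        intro hcon
        apply hu1ne
        funext i
        have := congrFun hcon i
        simp only [Pi.neg_apply, Pi.zero_apply, neg_eq_zero] at this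
        simp [this]
      have hs : ∑ i, (-u1) i = 0 := by
        simp only [Pi.neg_apply]
        rw [Finset.sum_neg_distrib, hsum1, neg_zero]
      have hL : G.lapMatrix ℝ *ᵥ (-u1) = hH.eigenvalues j₁ • (-u1) := by
        rw [Matrix.mulVec_neg, hLu1, smul_neg]
      have hhalf' : (((Finset.univ.filter fun i => 0 < (-u1) i)).card : ℝ) ≤ (N : ℝ) / 2 := by
        have h2 : 2 * (Finset.univ.filter fun i => 0 < (-u1) i).card ≤ N := by omega
        have := (Nat.cast_le (α := ℝ)).2 h2
        push_cast at this
        linarith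
      exact aux_fiedler_lower G hd hreg' hc hch (-u1) hx0 hs hhalf' hL
  have hlam : c ^ 2 / (2 * d) ≤ eigVal (lap G) 1 := hj1 ▸ hmain
  -- upper bound on the smallest grounded eigenvalue
  have hHg : (ground (lap G) v).IsHermitian := aux_ground_isHermitian hH v
  have hcardg : Fintype.card {i : Fin N // i ≠ v} = N - 1 := aux_card_ne v
  have hcardg0 : 0 < Fintype.card {i : Fin N // i ≠ v} := by omega
  have honeg : (fun _ : {i : Fin N // i ≠ v} => (1:ℝ)) ⬝ᵥ (fun _ => (1:ℝ))
      = (N : ℝ) - 1 := by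
    simp only [dotProduct, mul_one, Finset.sum_const, nsmul_eq_mul]
    rw [Finset.card_univ, hcardg]
    have : (1:ℕ) ≤ N := by omega
    push_cast [this]
    ring
  have hquad : (fun _ : {i : Fin N // i ≠ v} => (1:ℝ)) ⬝ᵥ
      (ground (lap G) v) *ᵥ (fun _ => (1:ℝ)) = (d : ℝ) := by
    rw [hlap]
    rw [aux_quad_ground G (fun i => by rw [SimpleGraph.lapMatrix_mulVec_const_eq_zero]; rfl) v]
    rw [aux_lap_diag G v, hreg' v]
  have hgr := aux_rayleigh_ge_min hHg (aux_eigVal_zero_le hHg hcardg0)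
    (fun _ : {i : Fin N // i ≠ v} => (1:ℝ))
  rw [honeg, hquad] at hgr
  have hN1pos : (0:ℝ) < (N:ℝ) - 1 := by
    have : (3:ℝ) ≤ (N:ℝ) := by exact_mod_cast hN3
    linarith
  have hgle : eigVal (ground (lap G) v) 0 ≤ (d:ℝ) / ((N:ℝ) - 1) := by
    rw [le_div_iff₀ hN1pos]
    exact hgr
  have hstrict : (d:ℝ) / ((N:ℝ) - 1) < c ^ 2 / (2 * d) := by
    rw [div_lt_div_iff₀ hN1pos (by positivity)]
    have := (div_lt_iff₀ (by positivity : (0:ℝ) < c^2)).1 hNR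
    nlinarith
  exact lt_of_le_of_lt hgle (lt_of_lt_of_le hstrict hlam)
end

section
/- Let G be a connected d-regular simple graph on N vertices with Cheeger constant h(G) ≥ c for some 0 < c ≤ d, let λ₂ be the second smallest eigenvalue of its Laplacian L, and let λ̄₁ be the smallest eigenvalue of the grounded Laplacian L̄ obtained by deleting the row and column of some vertex v. If N − 1 > d / (d − √(d² − c²)), then λ₂ > λ̄₁. -/
open Matrix

section Helpers

lemma abs_helper (a b : ℝ) (ha : 0 ≤ a) (hb : 0 ≤ b) :
    |a - b| * (a + b) = max (a^2 - b^2) 0 + max (b^2 - a^2) 0 := by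
  rcases le_total a b with h | h
  · rw [abs_of_nonpos (by linarith), max_eq_right (by nlinarith), max_eq_left (by nlinarith)]
    ring
  · rw [abs_of_nonneg (by linarith), max_eq_left (by nlinarith), max_eq_right (by nlinarith)]
    ring

section EigAux

variable {n : Type*} [Fintype n] [DecidableEq n]

lemma eigVal_eq {M : Matrix n n ℝ} (hM : M.IsHermitian) {k : ℕ} (hk : k < Fintype.card n) :
    eigVal M k = hM.eigenvalues₀ (Tuple.sort hM.eigenvalues₀ ⟨k, hk⟩) := by
  unfold eigVal
  rw [dif_pos ⟨hM, hk⟩]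
  rfl

lemma eigVal_zero_le {M : Matrix n n ℝ} (hM : M.IsHermitian) (hn : 0 < Fintype.card n) (i : n) :
    eigVal M 0 ≤ hM.eigenvalues i := by
  rw [eigVal_eq hM hn]
  have hmono := Tuple.monotone_sort hM.eigenvalues₀
  have h1 : hM.eigenvalues i
      = hM.eigenvalues₀ ((Fintype.equivOfCardEq (Fintype.card_fin _)).symm i) := rfl
  rw [h1]
  set τ := Tuple.sort hM.eigenvalues₀ with hτ
  set j := (Fintype.equivOfCardEq (Fintype.card_fin _)).symm i with hj
  have h2 : hM.eigenvalues₀ (τ (τ.symm j)) = hM.eigenvalues₀ j := by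
    rw [Equiv.apply_symm_apply]
  rw [← h2]
  exact hmono (by exact Nat.zero_le _)

lemma rayleigh_lower {M : Matrix n n ℝ} (hM : M.IsHermitian) (a : ℝ)
    (h : ∀ i, a ≤ hM.eigenvalues i) (x : n → ℝ) :
    a * (x ⬝ᵥ x) ≤ x ⬝ᵥ (M *ᵥ x) := by
  set U : Matrix n n ℝ := (hM.eigenvectorUnitary : Matrix n n ℝ) with hU
  have hUmem : U ∈ Matrix.unitaryGroup n ℝ := hM.eigenvectorUnitary.2
  set y : n → ℝ := star U *ᵥ x with hy
  have hstar : star U = Uᵀ := by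
    rw [← Matrix.conjTranspose_eq_transpose_of_trivial]; rfl
  have hxx : x ⬝ᵥ x = y ⬝ᵥ y := by
    rw [hy, hstar]
    rw [Matrix.dotProduct_mulVec, Matrix.vecMul_transpose, Matrix.mulVec_mulVec]
    have h1 : U * Uᵀ = 1 := by
      have := Matrix.mem_unitaryGroup_iff.mp hUmem
      rwa [hstar] at this
    rw [h1, Matrix.one_mulVec]
  have hMx : x ⬝ᵥ (M *ᵥ x) = ∑ i, hM.eigenvalues i * (y i)^2 := by
    conv_lhs => rw [hM.spectral_theorem, Unitary.conjStarAlgAut_apply]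
    rw [← Matrix.mulVec_mulVec, ← Matrix.mulVec_mulVec]
    rw [Matrix.dotProduct_mulVec x, ← Matrix.mulVec_transpose, ← hU, ← hstar, ← hy]
    simp only [dotProduct, Matrix.mulVec_diagonal, Function.comp_apply,
      RCLike.ofReal_real_eq_id, id_eq]
    exact Finset.sum_congr rfl fun i _ => by ring
  rw [hxx, hMx, dotProduct, Finset.mul_sum]
  apply Finset.sum_le_sum
  intro i _
  have h5 : a * (y i)^2 ≤ hM.eigenvalues i * (y i)^2 :=
    mul_le_mul_of_nonneg_right (h i) (sq_nonneg _)
  calc a * (y i * y i) = a * (y i)^2 := by ring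
    _ ≤ hM.eigenvalues i * (y i)^2 := h5

lemma eigVal_zero_rayleigh {M : Matrix n n ℝ} (hM : M.IsHermitian) (hn : 0 < Fintype.card n)
    (x : n → ℝ) : eigVal M 0 * (x ⬝ᵥ x) ≤ x ⬝ᵥ (M *ᵥ x) :=
  rayleigh_lower hM _ (fun i => eigVal_zero_le hM hn i) x

lemma eigVal_one_ge {M : Matrix n n ℝ} (hM : M.IsHermitian) (h2 : 2 ≤ Fintype.card n) {β : ℝ}
    (h : ∀ i j : n, i ≠ j → hM.eigenvalues i < β → hM.eigenvalues j < β → False) :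
    β ≤ eigVal M 1 := by
  by_contra hcon
  push_neg at hcon
  have h1 : (1:ℕ) < Fintype.card n := h2
  have h0 : (0:ℕ) < Fintype.card n := by omega
  rw [eigVal_eq hM h1] at hcon
  set τ := Tuple.sort hM.eigenvalues₀ with hτ
  have hmono := Tuple.monotone_sort hM.eigenvalues₀
  set e := (Fintype.equivOfCardEq (Fintype.card_fin (Fintype.card n))) with he
  set i0 := e (τ ⟨0, h0⟩) with hi0
  set i1 := e (τ ⟨1, h1⟩) with hi1
  have hne : i0 ≠ i1 := by
    rw [hi0, hi1]
    intro hcon2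
    have h3 := τ.injective (e.injective hcon2)
    simp at h3
  have hv0 : hM.eigenvalues i0 = hM.eigenvalues₀ (τ ⟨0, h0⟩) := by
    show hM.eigenvalues₀ (e.symm (e _)) = _
    rw [Equiv.symm_apply_apply]
  have hv1 : hM.eigenvalues i1 = hM.eigenvalues₀ (τ ⟨1, h1⟩) := by
    show hM.eigenvalues₀ (e.symm (e _)) = _
    rw [Equiv.symm_apply_apply]
  have hle : hM.eigenvalues₀ (τ ⟨0, h0⟩) ≤ hM.eigenvalues₀ (τ ⟨1, h1⟩) :=
    hmono (by exact Nat.zero_le _)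
  exact h i0 i1 hne (by rw [hv0]; linarith) (by rw [hv1]; exact hcon)

end EigAux

section GraphAux

variable {N : ℕ} (G : SimpleGraph (Fin N)) [DecidableRel G.Adj]

/-- boundary count (ordered pairs from `X` out of `X`) -/
def bdry (X : Finset (Fin N)) : ℕ :=
  (Finset.univ.filter fun p : Fin N × Fin N => G.Adj p.1 p.2 ∧ p.1 ∈ X ∧ p.2 ∉ X).card

lemma sweep {c : ℝ}
    (hcut : ∀ X : Finset (Fin N), X.Nonempty → 2 * (X.card : ℝ) ≤ N →
      c * X.card ≤ (bdry G X : ℝ))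
    (g : Fin N → ℝ) (hg0 : ∀ u, 0 ≤ g u) (hzero : ∃ u, g u = 0)
    (hsupp : 2 * (((Finset.univ.filter fun u => 0 < g u)).card : ℝ) ≤ N) :
    c * (∑ u, g u ^ 2) ≤
      ∑ u, ∑ w, if G.Adj u w then max (g u ^ 2 - g w ^ 2) 0 else 0 := by
  obtain ⟨u₀, hu₀⟩ := hzero
  have hN0 : 0 < N := u₀.pos
  haveI : NeZero N := ⟨hN0.ne'⟩
  set σ := Tuple.sort g with hσ
  have mono : Monotone (g ∘ σ) := Tuple.monotone_sort g
  set ρ : Fin N → Fin N := fun u => σ.symm u with hρ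
  have hσρ : ∀ u, σ (ρ u) = u := fun u => σ.apply_symm_apply u
  -- t k = square of k-th smallest value of g
  set t : ℕ → ℝ := fun k => if h : k < N then g (σ ⟨k, h⟩) ^ 2 else 0 with ht
  have htk : ∀ k : Fin N, t k = g (σ k) ^ 2 := by
    intro k; rw [ht]; simp only [k.isLt, dif_pos]
  have hg00 : g (σ ⟨0, hN0⟩) = 0 := by
    have h1 : g (σ ⟨0, hN0⟩) ≤ g (σ (ρ u₀)) := mono (Fin.zero_le _)
    rw [hσρ] at h1
    exact le_antisymm (by rwa [hu₀] at h1) (hg0 _)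
  have ht0 : t 0 = 0 := by
    rw [ht]; simp only [hN0, dif_pos]
    rw [show (⟨0, hN0⟩ : Fin N) = ⟨0, hN0⟩ from rfl, hg00]; ring
  set W : ℕ → ℝ := fun i => if i + 1 < N then t (i + 1) - t i else 0 with hW
  have hmono' : ∀ {i j : Fin N}, (i:ℕ) ≤ (j:ℕ) → g (σ i) ≤ g (σ j) := by
    intro i j hij; exact mono (by exact hij)
  have hWnn : ∀ i, 0 ≤ W i := by
    intro i
    rw [hW]
    by_cases h : i + 1 < N
    · simp only [h, if_pos]
      have h' : i < N := Nat.lt_of_succ_lt h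
      rw [ht]
      simp only [h, h', dif_pos]
      have := hmono' (i := ⟨i, h'⟩) (j := ⟨i+1, h⟩) (by simp)
      have h2 := hg0 (σ ⟨i, h'⟩)
      nlinarith
    · simp [h]
  -- telescoping over range m
  have htele : ∀ m : ℕ, m < N → ∑ i ∈ Finset.range m, W i = t m := by
    intro m hm
    have : ∀ i ∈ Finset.range m, W i = t (i+1) - t i := by
      intro i hi
      rw [Finset.mem_range] at hi
      have : i + 1 < N := by omega
      rw [hW]; simp [this]
    rw [Finset.sum_congr rfl this, Finset.sum_range_sub, ht0, sub_zero]
  -- key identity 1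
  have key1 : ∀ u, ∑ i ∈ Finset.range N, (if i < (ρ u : ℕ) then W i else 0) = g u ^ 2 := by
    intro u
    rw [← Finset.sum_filter]
    have hfil : (Finset.range N).filter (fun i => i < (ρ u : ℕ)) = Finset.range (ρ u : ℕ) := by
      ext i
      simp only [Finset.mem_filter, Finset.mem_range]
      have := (ρ u).isLt
      omega
    rw [hfil, htele _ (ρ u).isLt, htk (ρ u), hσρ]
  -- key identity 2
  have key2 : ∀ u w, ∑ i ∈ Finset.range N,
      (if (ρ w : ℕ) ≤ i ∧ i < (ρ u : ℕ) then W i else 0) = max (g u ^ 2 - g w ^ 2) 0 := by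
    intro u w
    rw [← Finset.sum_filter]
    have hfil : (Finset.range N).filter (fun i => (ρ w : ℕ) ≤ i ∧ i < (ρ u : ℕ))
        = Finset.Ico (ρ w : ℕ) (ρ u : ℕ) := by
      ext i
      simp only [Finset.mem_filter, Finset.mem_range, Finset.mem_Ico]
      have := (ρ u).isLt
      omega
    rw [hfil]
    rcases le_or_gt (ρ u : ℕ) (ρ w : ℕ) with hle | hlt
    · rw [Finset.Ico_eq_empty (by omega), Finset.sum_empty]
      have : g u ≤ g w := by
        have := hmono' hle
        rwa [hσρ, hσρ] at this
      have : g u ^ 2 ≤ g w ^ 2 := by nlinarith [hg0 u, hg0 w]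
      rw [max_eq_right (by linarith)]
    · rw [Finset.sum_Ico_eq_sub _ (le_of_lt hlt)]
      rw [htele _ (ρ u).isLt, htele _ ((ρ w).isLt), htk (ρ u), htk (ρ w), hσρ, hσρ]
      have hgw : g w ≤ g u := by
        have := hmono' (le_of_lt hlt)
        rwa [hσρ, hσρ] at this
      rw [max_eq_left (by nlinarith [hg0 u, hg0 w])]
  -- the level sets
  set Xi : ℕ → Finset (Fin N) := fun i => Finset.univ.filter fun u => i < (ρ u : ℕ) with hXi
  have htnn : ∀ k, 0 ≤ t k := by
    intro k; rw [ht]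
    by_cases h : k < N
    · simp only [h, dif_pos]; positivity
    · simp [h]
  -- per-i inequality
  have peri : ∀ i ∈ Finset.range N,
      c * (((Xi i).card : ℝ) * W i) ≤ ((bdry G (Xi i) : ℝ)) * W i := by
    intro i _
    rcases (hWnn i).eq_or_lt with hW0 | hWpos
    · rw [← hW0]; simp
    · have hi1 : i + 1 < N := by
        by_contra hcon
        rw [hW] at hWpos; simp only [hcon, if_neg, if_false] at hWpos
        · exact absurd rfl (ne_of_gt hWpos)
      have hWi : W i = t (i+1) - t i := by rw [hW]; simp [hi1]
      have hti : t i < t (i+1) := by rw [hWi] at hWpos; linarith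
      have hgpos : 0 < g (σ ⟨i+1, hi1⟩) := by
        have h2 : t (i+1) = g (σ ⟨i+1, hi1⟩) ^ 2 := by rw [ht]; simp [hi1]
        have h3 : 0 < g (σ ⟨i+1, hi1⟩) ^ 2 := by
          have := htnn i; linarith [hti]
        have := hg0 (σ ⟨i+1, hi1⟩)
        nlinarith
      have hXisub : Xi i ⊆ Finset.univ.filter fun u => 0 < g u := by
        intro u hu
        rw [hXi, Finset.mem_filter] at hu
        rw [Finset.mem_filter]
        refine ⟨Finset.mem_univ _, ?_⟩
        have hru : i + 1 ≤ (ρ u : ℕ) := hu.2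
        have := hmono' (i := ⟨i+1, hi1⟩) (j := ρ u) hru
        rw [hσρ] at this
        linarith
      have hXine : (Xi i).Nonempty := by
        refine ⟨σ ⟨N-1, by omega⟩, ?_⟩
        rw [hXi, Finset.mem_filter]
        refine ⟨Finset.mem_univ _, ?_⟩
        have : ρ (σ ⟨N-1, by omega⟩) = ⟨N-1, by omega⟩ := σ.symm_apply_apply _
        rw [this]
        simp only []
        omega
      have hXicard : 2 * ((Xi i).card : ℝ) ≤ N := by
        have h4 := Finset.card_le_card hXisub
        have : ((Xi i).card : ℝ) ≤ (((Finset.univ.filter fun u => 0 < g u).card : ℕ) : ℝ) :=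
          Nat.cast_le.mpr h4
        linarith
      have := hcut (Xi i) hXine hXicard
      calc c * (((Xi i).card : ℝ) * W i) = (c * ((Xi i).card : ℝ)) * W i := by ring
        _ ≤ ((bdry G (Xi i) : ℝ)) * W i := mul_le_mul_of_nonneg_right this (le_of_lt hWpos)
  -- LHS rewriting
  have lhs_eq : c * (∑ u, g u ^ 2) = ∑ i ∈ Finset.range N, c * (((Xi i).card : ℝ) * W i) := by
    have h1 : (∑ u, g u ^ 2) = ∑ u, ∑ i ∈ Finset.range N, (if i < (ρ u : ℕ) then W i else 0) :=
      Finset.sum_congr rfl fun u _ => (key1 u).symm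
    rw [h1, Finset.sum_comm, Finset.mul_sum]
    refine Finset.sum_congr rfl fun i _ => ?_
    congr 1
    have h2 : (∑ u, if i < (ρ u : ℕ) then W i else 0) = ∑ u ∈ Xi i, W i := by
      rw [hXi, Finset.sum_filter]
    rw [h2, Finset.sum_const, nsmul_eq_mul]
  -- RHS rewriting
  have rhs_eq : (∑ u, ∑ w, if G.Adj u w then max (g u ^ 2 - g w ^ 2) 0 else 0)
      = ∑ i ∈ Finset.range N, ((bdry G (Xi i) : ℝ)) * W i := by
    have step1 : ∀ u w, (if G.Adj u w then max (g u ^ 2 - g w ^ 2) 0 else 0)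
        = ∑ i ∈ Finset.range N,
          (if G.Adj u w ∧ ((ρ w : ℕ) ≤ i ∧ i < (ρ u : ℕ)) then W i else 0) := by
      intro u w
      by_cases h : G.Adj u w
      · simp only [h, true_and, if_true]
        exact (key2 u w).symm
      · simp [h]
    calc (∑ u, ∑ w, if G.Adj u w then max (g u ^ 2 - g w ^ 2) 0 else 0)
        = ∑ p : Fin N × Fin N, (if G.Adj p.1 p.2 then max (g p.1 ^ 2 - g p.2 ^ 2) 0 else 0) := by
          rw [Fintype.sum_prod_type]
      _ = ∑ p : Fin N × Fin N, ∑ i ∈ Finset.range N,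
            (if G.Adj p.1 p.2 ∧ ((ρ p.2 : ℕ) ≤ i ∧ i < (ρ p.1 : ℕ)) then W i else 0) :=
          Finset.sum_congr rfl fun p _ => step1 p.1 p.2
      _ = ∑ i ∈ Finset.range N, ∑ p : Fin N × Fin N,
            (if G.Adj p.1 p.2 ∧ ((ρ p.2 : ℕ) ≤ i ∧ i < (ρ p.1 : ℕ)) then W i else 0) :=
          Finset.sum_comm
      _ = ∑ i ∈ Finset.range N, ((bdry G (Xi i) : ℝ)) * W i := by
          refine Finset.sum_congr rfl fun i _ => ?_
          rw [← Finset.sum_filter, Finset.sum_const, nsmul_eq_mul]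
          congr 2
          unfold bdry
          congr 1
          apply Finset.filter_congr
          intro p _
          simp only [hXi, Finset.mem_filter, Finset.mem_univ, true_and, Nat.not_lt, eq_iff_iff]
          tauto
  rw [lhs_eq, rhs_eq]
  exact Finset.sum_le_sum peri

set_option maxHeartbeats 1000000 in
lemma cheeger_sq_aux {d : ℕ} (hreg : ∀ u, G.degree u = d) {c lam : ℝ} (hc0 : 0 < c)
    (hcut : ∀ X : Finset (Fin N), X.Nonempty → 2 * (X.card : ℝ) ≤ N →
      c * X.card ≤ (bdry G X : ℝ))
    (f : Fin N → ℝ)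
    (hev : G.lapMatrix ℝ *ᵥ f = lam • f) (h0 : 0 < lam) (hd : lam < d)
    (hPne : (Finset.univ.filter fun u => 0 < f u).Nonempty)
    (hPcard : 2 * (((Finset.univ.filter fun u => 0 < f u)).card : ℝ) ≤ N) :
    c ^ 2 ≤ lam * (2 * d - lam) := by
  set g : Fin N → ℝ := fun u => max (f u) 0 with hg
  have hg0 : ∀ u, 0 ≤ g u := fun u => le_max_right _ _
  have hgf : ∀ u, f u ≤ g u := fun u => le_max_left _ _
  have hgpos : ∀ u, (0 < g u ↔ 0 < f u) := by
    intro u; rw [hg]; simp only [lt_max_iff, lt_irrefl, or_false]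
  set W2 : ℝ := ∑ u, g u ^ 2 with hW2
  have hW2pos : 0 < W2 := by
    obtain ⟨u, hu⟩ := hPne
    rw [Finset.mem_filter] at hu
    have : 0 < g u := (hgpos u).mpr hu.2
    exact Finset.sum_pos' (fun i _ => sq_nonneg _) ⟨u, Finset.mem_univ u, by positivity⟩
  set Q : ℝ := g ⬝ᵥ (G.lapMatrix ℝ *ᵥ g) with hQ
  -- Q ≤ lam * W2
  have hQle : Q ≤ lam * W2 := by
    have point : ∀ u, g u * (G.lapMatrix ℝ *ᵥ g) u ≤ lam * g u ^ 2 := by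
      intro u
      have hLf : (G.lapMatrix ℝ *ᵥ f) u = lam * f u := by
        rw [hev]; simp
      rcases le_or_gt (f u) 0 with h | h
      · have hgu : g u = 0 := max_eq_right h
        rw [hgu]; simp
      · have hgu : g u = f u := max_eq_left h.le
        have hle : (G.lapMatrix ℝ *ᵥ g) u ≤ (G.lapMatrix ℝ *ᵥ f) u := by
          rw [SimpleGraph.lapMatrix_mulVec_apply, SimpleGraph.lapMatrix_mulVec_apply, hgu]
          have : ∑ w ∈ G.neighborFinset u, f w ≤ ∑ w ∈ G.neighborFinset u, g w :=
            Finset.sum_le_sum fun w _ => hgf w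
          linarith
        calc g u * (G.lapMatrix ℝ *ᵥ g) u ≤ g u * (G.lapMatrix ℝ *ᵥ f) u :=
              mul_le_mul_of_nonneg_left hle (hg0 u)
          _ = lam * g u ^ 2 := by rw [hLf, hgu]; ring
    calc Q = ∑ u, g u * (G.lapMatrix ℝ *ᵥ g) u := rfl
      _ ≤ ∑ u, lam * g u ^ 2 := Finset.sum_le_sum fun u _ => point u
      _ = lam * W2 := by rw [hW2, Finset.mul_sum]
  have hQnn : 0 ≤ Q := by
    have := (SimpleGraph.posSemidef_lapMatrix ℝ G).dotProduct_mulVec_nonneg g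
    simpa using this
  -- quadratic form identity
  have hform : (∑ u, ∑ w, if G.Adj u w then (g u - g w)^2 else 0) = 2 * Q := by
    have h1 := SimpleGraph.lapMatrix_toLinearMap₂' ℝ G g
    rw [Matrix.toLinearMap₂'_apply'] at h1
    rw [hQ]; linarith
  -- degree sums
  have hsq1 : (∑ u, ∑ w, if G.Adj u w then g u ^ 2 else 0) = d * W2 := by
    have inner : ∀ u, (∑ w, if G.Adj u w then g u ^ 2 else 0) = (d : ℝ) * g u ^ 2 := by
      intro u
      have : (∑ w, if G.Adj u w then g u ^ 2 else 0)
          = g u ^ 2 * ∑ w, if G.Adj u w then (1:ℝ) else 0 := by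
        rw [Finset.mul_sum]
        exact Finset.sum_congr rfl fun w _ => by split_ifs <;> ring
      rw [this, ← SimpleGraph.degree_eq_sum_if_adj, hreg u]
      ring
    rw [Finset.sum_congr rfl fun u _ => inner u, ← Finset.mul_sum]
  have hsq2 : (∑ u, ∑ w, if G.Adj u w then g w ^ 2 else 0) = d * W2 := by
    have : ∀ w u, (if G.Adj u w then g w ^ 2 else 0) = if G.Adj w u then g w ^ 2 else 0 := by
      intro w u; exact if_congr (G.adj_comm u w) rfl rfl
    calc (∑ u, ∑ w, if G.Adj u w then g w ^ 2 else 0)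
        = ∑ w, ∑ u, if G.Adj u w then g w ^ 2 else 0 := Finset.sum_comm
      _ = ∑ w, ∑ u, if G.Adj w u then g w ^ 2 else 0 :=
          Finset.sum_congr rfl fun w _ => Finset.sum_congr rfl fun u _ => this w u
      _ = d * W2 := hsq1
  have hplus : (∑ u, ∑ w, if G.Adj u w then (g u + g w)^2 else 0) = 4 * d * W2 - 2 * Q := by
    have point : ∀ u w, (if G.Adj u w then (g u + g w)^2 else 0)
        = 2 * (if G.Adj u w then g u ^2 else 0) + 2 * (if G.Adj u w then g w ^2 else 0)
          - (if G.Adj u w then (g u - g w)^2 else 0) := by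
      intro u w; split_ifs <;> ring
    calc (∑ u, ∑ w, if G.Adj u w then (g u + g w)^2 else 0)
        = ∑ u, ∑ w, (2 * (if G.Adj u w then g u ^2 else 0)
            + 2 * (if G.Adj u w then g w ^2 else 0)
            - (if G.Adj u w then (g u - g w)^2 else 0)) := by
          exact Finset.sum_congr rfl fun u _ => Finset.sum_congr rfl fun w _ => point u w
      _ = 2 * (∑ u, ∑ w, if G.Adj u w then g u ^2 else 0)
            + 2 * (∑ u, ∑ w, if G.Adj u w then g w ^2 else 0)
            - (∑ u, ∑ w, if G.Adj u w then (g u - g w)^2 else 0) := by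
          simp only [Finset.sum_sub_distrib, Finset.sum_add_distrib, Finset.mul_sum]
      _ = 4 * d * W2 - 2 * Q := by rw [hsq1, hsq2, hform]; ring
  -- swap symmetry
  have hswap : (∑ u, ∑ w, if G.Adj u w then max (g w ^ 2 - g u ^ 2) 0 else 0)
      = ∑ u, ∑ w, if G.Adj u w then max (g u ^ 2 - g w ^ 2) 0 else 0 := by
    calc (∑ u, ∑ w, if G.Adj u w then max (g w ^ 2 - g u ^ 2) 0 else 0)
        = ∑ w, ∑ u, if G.Adj u w then max (g w ^ 2 - g u ^ 2) 0 else 0 := Finset.sum_comm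
      _ = ∑ w, ∑ u, if G.Adj w u then max (g w ^ 2 - g u ^ 2) 0 else 0 :=
          Finset.sum_congr rfl fun w _ => Finset.sum_congr rfl fun u _ =>
            if_congr (G.adj_comm u w) rfl rfl
  set Dmax : ℝ := ∑ u, ∑ w, if G.Adj u w then max (g u ^ 2 - g w ^ 2) 0 else 0 with hDmax
  set D : ℝ := ∑ u, ∑ w, if G.Adj u w then |g u - g w| * (g u + g w) else 0 with hD
  have habs : D = 2 * Dmax := by
    have point : ∀ u w, (if G.Adj u w then |g u - g w| * (g u + g w) else 0)
        = (if G.Adj u w then max (g u ^2 - g w ^2) 0 else 0)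
          + (if G.Adj u w then max (g w ^2 - g u ^2) 0 else 0) := by
      intro u w
      split_ifs with h
      · exact abs_helper _ _ (hg0 u) (hg0 w)
      · ring
    calc D = ∑ u, ∑ w, ((if G.Adj u w then max (g u ^2 - g w ^2) 0 else 0)
          + (if G.Adj u w then max (g w ^2 - g u ^2) 0 else 0)) := by
          rw [hD]
          exact Finset.sum_congr rfl fun u _ => Finset.sum_congr rfl fun w _ => point u w
      _ = Dmax + ∑ u, ∑ w, (if G.Adj u w then max (g w ^2 - g u ^2) 0 else 0) := by
          simp only [Finset.sum_add_distrib, hDmax]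
      _ = 2 * Dmax := by rw [hswap]; ring
  -- Cauchy-Schwarz
  have hCS : D ^ 2 ≤ (2 * Q) * (4 * d * W2 - 2 * Q) := by
    set S : Finset (Fin N × Fin N) := Finset.univ.filter fun p => G.Adj p.1 p.2 with hS
    have hconv : ∀ φ : Fin N → Fin N → ℝ,
        (∑ u, ∑ w, if G.Adj u w then φ u w else 0) = ∑ p ∈ S, φ p.1 p.2 := by
      intro φ
      rw [hS, Finset.sum_filter, Fintype.sum_prod_type]
    have hD' : D = ∑ p ∈ S, |g p.1 - g p.2| * (g p.1 + g p.2) := by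
      rw [hD, hconv]
    have := Finset.sum_mul_sq_le_sq_mul_sq S (fun p => |g p.1 - g p.2|)
      (fun p => g p.1 + g p.2)
    rw [← hD'] at this
    calc D ^ 2 ≤ (∑ p ∈ S, |g p.1 - g p.2| ^ 2) * (∑ p ∈ S, (g p.1 + g p.2) ^ 2) := this
      _ = (∑ p ∈ S, (g p.1 - g p.2) ^ 2) * (∑ p ∈ S, (g p.1 + g p.2) ^ 2) := by
          congr 1
          exact Finset.sum_congr rfl fun p _ => sq_abs _
      _ = (2 * Q) * (4 * d * W2 - 2 * Q) := by
          rw [← hconv (fun u w => (g u - g w)^2), ← hconv (fun u w => (g u + g w)^2),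
            hform, hplus]
  -- sweep
  have hzero : ∃ u, g u = 0 := by
    by_contra hcon
    push_neg at hcon
    have hall : ∀ u, 0 < g u := fun u => lt_of_le_of_ne (hg0 u) (Ne.symm (hcon u))
    have heq : (Finset.univ.filter fun u => 0 < f u) = Finset.univ := by
      apply Finset.filter_true_of_mem
      intro u _; exact (hgpos u).mp (hall u)
    obtain ⟨u, _⟩ := hPne
    have hN0 : 0 < N := u.pos
    rw [heq, Finset.card_univ, Fintype.card_fin] at hPcard
    have : (0:ℝ) < N := by exact_mod_cast hN0
    linarith
  have hsupp2 : 2 * (((Finset.univ.filter fun u => 0 < g u)).card : ℝ) ≤ N := by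
    have : (Finset.univ.filter fun u => 0 < g u) = (Finset.univ.filter fun u => 0 < f u) := by
      apply Finset.filter_congr
      intro u _
      exact hgpos u
    rw [this]; exact hPcard
  have hsweep : c * W2 ≤ Dmax := sweep G hcut g hg0 hzero hsupp2
  -- final algebra
  have hDnn : 0 ≤ Dmax := by
    rw [hDmax]
    refine Finset.sum_nonneg fun u _ => Finset.sum_nonneg fun w _ => ?_
    split_ifs
    · exact le_max_right _ _
    · exact le_refl 0
  have h2cW2 : (2 * (c * W2))^2 ≤ (2*Q) * (4*d*W2 - 2*Q) := by
    have h1 : 2 * (c * W2) ≤ D := by rw [habs]; linarith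
    have h2 : 0 ≤ 2 * (c * W2) := by positivity
    calc (2 * (c * W2))^2 ≤ D^2 := by
          have := pow_le_pow_left₀ h2 h1 2
          simpa using this
      _ ≤ (2*Q) * (4*d*W2 - 2*Q) := hCS
  -- c^2 * W2^2 ≤ Q * (2dW2 - Q) ≤ lam(2d-lam) W2^2
  have hkey : (lam * W2 - Q) * ((2 * d * W2 - Q) - lam * W2) ≥ 0 := by
    apply mul_nonneg
    · linarith
    · nlinarith
  have e1 : c^2 * W2^2 ≤ Q * (2*d*W2 - Q) := by nlinarith [h2cW2]
  have e2 : Q * (2*d*W2 - Q) ≤ lam * (2*d - lam) * W2^2 := by nlinarith [hkey]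
  have hfin : c^2 * W2^2 ≤ lam * (2*d - lam) * W2^2 := le_trans e1 e2
  have hW2sq : 0 < W2^2 := by positivity
  exact le_of_mul_le_mul_right hfin hW2sq

lemma cheeger_sq {d : ℕ} (hreg : ∀ u, G.degree u = d) {c lam : ℝ} (hc0 : 0 < c)
    (hcut : ∀ X : Finset (Fin N), X.Nonempty → 2 * (X.card : ℝ) ≤ N →
      c * X.card ≤ (bdry G X : ℝ))
    (f : Fin N → ℝ) (hf : f ≠ 0)
    (hev : G.lapMatrix ℝ *ᵥ f = lam • f) (h0 : 0 < lam) (hd : lam < d) :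
    c ^ 2 ≤ lam * (2 * d - lam) := by
  -- sum of f is zero
  have hsum : ∑ u, f u = 0 := by
    have h1 : (fun _ => (1:ℝ)) ⬝ᵥ (G.lapMatrix ℝ *ᵥ f) = lam * ((fun _ => (1:ℝ)) ⬝ᵥ f) := by
      rw [hev, dotProduct_smul]; rfl
    have h2 : (fun _ => (1:ℝ)) ⬝ᵥ (G.lapMatrix ℝ *ᵥ f) = 0 := by
      rw [Matrix.dotProduct_mulVec]
      have h3 : (fun _ => (1:ℝ)) ᵥ* G.lapMatrix ℝ = 0 := by
        have h4 : (G.lapMatrix ℝ)ᵀ = G.lapMatrix ℝ := G.isSymm_lapMatrix (R := ℝ)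
        rw [← h4, Matrix.vecMul_transpose, SimpleGraph.lapMatrix_mulVec_const_eq_zero]
      rw [h3, zero_dotProduct]
    have h5 : (fun _ => (1:ℝ)) ⬝ᵥ f = ∑ u, f u := by
      simp [dotProduct]
    rw [h2] at h1
    have := h1.symm
    rw [h5] at this
    rcases mul_eq_zero.mp this with h | h
    · exact absurd h (ne_of_gt h0)
    · exact h
  -- both sides nonempty
  obtain ⟨u₁, hu₁⟩ : ∃ u, f u ≠ 0 := Function.ne_iff.mp hf
  have hPne : (Finset.univ.filter fun u => 0 < f u).Nonempty := by
    by_contra hcon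
    rw [Finset.not_nonempty_iff_eq_empty, Finset.filter_eq_empty_iff] at hcon
    have hle : ∀ u, f u ≤ 0 := fun u => le_of_not_gt (hcon (Finset.mem_univ u))
    have : ∀ u ∈ Finset.univ, f u = 0 :=
      (Finset.sum_eq_zero_iff_of_nonpos (fun u _ => hle u)).mp hsum
    exact hu₁ (this u₁ (Finset.mem_univ u₁))
  have hNne : (Finset.univ.filter fun u => f u < 0).Nonempty := by
    by_contra hcon
    rw [Finset.not_nonempty_iff_eq_empty, Finset.filter_eq_empty_iff] at hcon
    have hge : ∀ u, 0 ≤ f u := fun u => le_of_not_gt (hcon (Finset.mem_univ u))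
    have : ∀ u ∈ Finset.univ, f u = 0 :=
      (Finset.sum_eq_zero_iff_of_nonneg (fun u _ => hge u)).mp hsum
    exact hu₁ (this u₁ (Finset.mem_univ u₁))
  -- cards
  have hdisj : Disjoint (Finset.univ.filter fun u => 0 < f u)
      (Finset.univ.filter fun u => f u < 0) := by
    rw [Finset.disjoint_filter]
    intro u _ h1
    exact not_lt.mpr (le_of_lt h1)
  have hcards : (Finset.univ.filter fun u => 0 < f u).card
      + (Finset.univ.filter fun u => f u < 0).card ≤ N := by
    rw [← Finset.card_union_of_disjoint hdisj]
    calc _ ≤ (Finset.univ : Finset (Fin N)).card := Finset.card_le_univ _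
      _ = N := by rw [Finset.card_univ, Fintype.card_fin]
  rcases le_or_gt (2 * (Finset.univ.filter fun u => 0 < f u).card) N with hP | hP
  · exact cheeger_sq_aux G hreg hc0 hcut f hev h0 hd hPne (by exact_mod_cast hP)
  · -- use -f
    have hNcard : 2 * (Finset.univ.filter fun u => f u < 0).card ≤ N := by omega
    have hev' : G.lapMatrix ℝ *ᵥ (-f) = lam • (-f) := by
      rw [Matrix.mulVec_neg, hev, smul_neg]
    have hfil : (Finset.univ.filter fun u => 0 < (-f) u)
        = (Finset.univ.filter fun u => f u < 0) := by
      apply Finset.filter_congr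
      intro u _
      simp only [Pi.neg_apply, Left.nonneg_neg_iff, neg_pos]
    refine cheeger_sq_aux G hreg hc0 hcut (-f) hev' h0 hd ?_ ?_
    · rw [hfil]; exact hNne
    · rw [hfil]; exact_mod_cast hNcard

lemma lap_second_ge {d : ℕ}
    (hconn : G.Connected) (hreg : ∀ u, G.degree u = d) {c : ℝ} (hc0 : 0 < c) (hcd : c ≤ d)
    (hcut : ∀ X : Finset (Fin N), X.Nonempty → 2 * (X.card : ℝ) ≤ N →
      c * X.card ≤ (bdry G X : ℝ)) (h2 : 2 ≤ N) :
    (d:ℝ) - Real.sqrt ((d:ℝ)^2 - c^2) ≤ eigVal (G.lapMatrix ℝ) 1 := by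
  set β : ℝ := (d:ℝ) - Real.sqrt ((d:ℝ)^2 - c^2) with hβ
  have hd0 : (0:ℝ) < d := lt_of_lt_of_le hc0 hcd
  have hβd : β ≤ d := by
    have := Real.sqrt_nonneg ((d:ℝ)^2 - c^2)
    rw [hβ]; linarith
  have hM : (G.lapMatrix ℝ).IsHermitian := (SimpleGraph.posSemidef_lapMatrix ℝ G).1
  apply eigVal_one_ge hM (by rw [Fintype.card_fin]; exact h2)
  intro i j hne hi hj
  -- common analysis of a small eigenvalue
  have key : ∀ k : Fin N, hM.eigenvalues k < β →
      hM.eigenvalues k = 0 ∧ ∀ u w : Fin N,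
        (hM.eigenvectorBasis k : EuclideanSpace ℝ (Fin N)) u
          = (hM.eigenvectorBasis k : EuclideanSpace ℝ (Fin N)) w := by
    intro k hk
    set x : Fin N → ℝ := ⇑(hM.eigenvectorBasis k) with hx
    have hev : G.lapMatrix ℝ *ᵥ x = hM.eigenvalues k • x := hM.mulVec_eigenvectorBasis k
    have hxne : x ≠ 0 := by
      intro h0
      have h1 : hM.eigenvectorBasis k = 0 := by
        ext u
        exact congrFun h0 u
      have h3 := hM.eigenvectorBasis.orthonormal.1 k
      rw [h1] at h3
      simp at h3
    have hnn : 0 ≤ hM.eigenvalues k :=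
      (SimpleGraph.posSemidef_lapMatrix ℝ G).eigenvalues_nonneg k
    rcases hnn.eq_or_lt with h0 | h0
    · -- eigenvalue zero: eigenvector constant
      refine ⟨h0.symm, ?_⟩
      have hz : G.lapMatrix ℝ *ᵥ x = 0 := by
        rw [hev, ← h0]; simp
      have hz2 : Matrix.toLin' (G.lapMatrix ℝ) x = 0 := by
        rw [Matrix.toLin'_apply]; exact hz
      have := (G.lapMatrix_mulVec_eq_zero_iff_forall_reachable).mp hz
      intro u w
      exact this u w (hconn.preconnected u w)
    · -- positive small eigenvalue: contradiction with Cheeger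
      exfalso
      have hlt : hM.eigenvalues k < d := lt_of_lt_of_le hk hβd
      have hsq := cheeger_sq G hreg hc0 hcut x hxne hev h0 hlt
      -- derive eigenvalue ≥ β
      have h5 : ((d:ℝ) - hM.eigenvalues k)^2 ≤ (d:ℝ)^2 - c^2 := by nlinarith
      have h6 : (d:ℝ) - hM.eigenvalues k ≤ Real.sqrt ((d:ℝ)^2 - c^2) := by
        have h7 : (d:ℝ) - hM.eigenvalues k = Real.sqrt (((d:ℝ) - hM.eigenvalues k)^2) := by
          rw [Real.sqrt_sq (by linarith)]
        rw [h7]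
        exact Real.sqrt_le_sqrt h5
      rw [hβ] at hk
      linarith
  obtain ⟨hz_i, hc_i⟩ := key i hi
  obtain ⟨hz_j, hc_j⟩ := key j hj
  -- two orthogonal nonzero constant vectors: contradiction
  have horth : (inner ℝ (hM.eigenvectorBasis i) (hM.eigenvectorBasis j) : ℝ) = 0 :=
    hM.eigenvectorBasis.orthonormal.2 hne
  have hinner : (inner ℝ (hM.eigenvectorBasis i) (hM.eigenvectorBasis j) : ℝ)
      = ∑ u : Fin N, (hM.eigenvectorBasis i : EuclideanSpace ℝ (Fin N)) u
          * (hM.eigenvectorBasis j : EuclideanSpace ℝ (Fin N)) u := by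
    rw [PiLp.inner_apply]
    simp [RCLike.inner_apply, mul_comm]
  -- nonzero at some coordinate
  have hione : ‖hM.eigenvectorBasis i‖ = 1 := hM.eigenvectorBasis.orthonormal.1 i
  have hjone : ‖hM.eigenvectorBasis j‖ = 1 := hM.eigenvectorBasis.orthonormal.1 j
  have hxne : ∃ u, (hM.eigenvectorBasis i : EuclideanSpace ℝ (Fin N)) u ≠ 0 := by
    by_contra hcon
    push_neg at hcon
    have : hM.eigenvectorBasis i = 0 := by ext u; exact hcon u
    rw [this] at hione; simp at hione
  have hyne : ∃ u, (hM.eigenvectorBasis j : EuclideanSpace ℝ (Fin N)) u ≠ 0 := by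
    by_contra hcon
    push_neg at hcon
    have : hM.eigenvectorBasis j = 0 := by ext u; exact hcon u
    rw [this] at hjone; simp at hjone
  obtain ⟨u₁, hu₁⟩ := hxne
  obtain ⟨u₂, hu₂⟩ := hyne
  have hterm : ∀ u : Fin N, (hM.eigenvectorBasis i : EuclideanSpace ℝ (Fin N)) u
      * (hM.eigenvectorBasis j : EuclideanSpace ℝ (Fin N)) u
      = (hM.eigenvectorBasis i : EuclideanSpace ℝ (Fin N)) u₁
        * (hM.eigenvectorBasis j : EuclideanSpace ℝ (Fin N)) u₂ := by
    intro u
    rw [hc_i u u₁, hc_j u u₂]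
  rw [hinner, Finset.sum_congr rfl fun u _ => hterm u, Finset.sum_const] at horth
  have hN0 : 0 < N := by omega
  rw [Finset.card_univ, Fintype.card_fin] at horth
  have : (hM.eigenvectorBasis i : EuclideanSpace ℝ (Fin N)) u₁
      * (hM.eigenvectorBasis j : EuclideanSpace ℝ (Fin N)) u₂ ≠ 0 := mul_ne_zero hu₁ hu₂
  have hN0' : (N:ℝ) ≠ 0 := by positivity
  rw [nsmul_eq_mul] at horth
  exact this (by
    rcases mul_eq_zero.mp horth with h | h
    · exact absurd h hN0'
    · exact h)

lemma ground_isHermitian {N : ℕ} {M : Matrix (Fin N) (Fin N) ℝ} (hM : M.IsHermitian)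
    (v : Fin N) : (ground M v).IsHermitian := by
  have hsym : ∀ a b, M a b = M b a := fun a b => by
    conv_lhs => rw [← hM]
    simp [Matrix.conjTranspose_apply]
  ext i j
  simp only [ground, Matrix.conjTranspose_apply, Matrix.submatrix_apply, star_trivial]
  exact hsym j.1 i.1

lemma card_ne (N : ℕ) (v : Fin N) : Fintype.card {i : Fin N // i ≠ v} = N - 1 := by
  have h1 : Fintype.card {i : Fin N // i ≠ v} = Fintype.card (Fin N) - Fintype.card {i : Fin N // i = v} :=
    Fintype.card_subtype_compl _
  rw [h1, Fintype.card_subtype_eq, Fintype.card_fin]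

lemma ground_quad {N : ℕ} (G : SimpleGraph (Fin N)) [DecidableRel G.Adj]
    {d : ℕ} (hreg : ∀ u, G.degree u = d) (v : Fin N) :
    (fun _ : {i : Fin N // i ≠ v} => (1:ℝ)) ⬝ᵥ
      (ground (G.lapMatrix ℝ) v *ᵥ fun _ => (1:ℝ)) = d := by
  have hrow : ∀ i : Fin N, ∑ j : Fin N, G.lapMatrix ℝ i j = 0 := by
    intro i
    have := congrFun (SimpleGraph.lapMatrix_mulVec_const_eq_zero G (R := ℝ)) i
    simpa [Matrix.mulVec, dotProduct] using this
  have hentry : ∀ i : Fin N, i ≠ v → G.lapMatrix ℝ i v = -(if G.Adj i v then (1:ℝ) else 0) := by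
    intro i hi
    simp [SimpleGraph.lapMatrix, SimpleGraph.degMatrix, Matrix.diagonal, hi]
  have hsub : ∀ (f : Fin N → ℝ), (∑ j : {i : Fin N // i ≠ v}, f j.1) = ∑ j ∈ Finset.univ.erase v, f j := by
    intro f
    exact (Finset.sum_subtype _ (fun x => by simp [Finset.mem_erase]) f).symm
  have hinner : ∀ i : {i : Fin N // i ≠ v},
      (∑ j : {i : Fin N // i ≠ v}, G.lapMatrix ℝ i.1 j.1) = if G.Adj i.1 v then (1:ℝ) else 0 := by
    intro i
    rw [hsub (fun j => G.lapMatrix ℝ i.1 j)]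
    have h2 : (∑ j ∈ Finset.univ.erase v, G.lapMatrix ℝ i.1 j) + G.lapMatrix ℝ i.1 v
        = ∑ j : Fin N, G.lapMatrix ℝ i.1 j := Finset.sum_erase_add _ _ (Finset.mem_univ v)
    rw [hrow i.1] at h2
    rw [hentry i.1 i.2] at h2
    linarith [h2]
  calc (fun _ : {i : Fin N // i ≠ v} => (1:ℝ)) ⬝ᵥ (ground (G.lapMatrix ℝ) v *ᵥ fun _ => (1:ℝ))
      = ∑ i : {i : Fin N // i ≠ v}, ∑ j : {i : Fin N // i ≠ v}, G.lapMatrix ℝ i.1 j.1 := by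
        simp [dotProduct, Matrix.mulVec, ground]
    _ = ∑ i : {i : Fin N // i ≠ v}, (if G.Adj i.1 v then (1:ℝ) else 0) :=
        Finset.sum_congr rfl fun i _ => hinner i
    _ = ∑ i ∈ Finset.univ.erase v, (if G.Adj i v then (1:ℝ) else 0) :=
        hsub (fun i => if G.Adj i v then (1:ℝ) else 0)
    _ = ∑ i : Fin N, (if G.Adj i v then (1:ℝ) else 0) := by
        rw [← Finset.sum_erase_add _ _ (Finset.mem_univ v)]
        simp
    _ = ∑ i : Fin N, (if G.Adj v i then (1:ℝ) else 0) :=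
        Finset.sum_congr rfl fun i _ => if_congr (G.adj_comm i v) rfl rfl
    _ = (G.degree v : ℝ) := (SimpleGraph.degree_eq_sum_if_adj G v).symm
    _ = d := by rw [hreg v]

end GraphAux

end Helpers

/-- For a connected `d`-regular simple graph on `N` vertices with
Cheeger constant `h(G) ≥ c` (`0 < c ≤ d`), if `N - 1 > d / (d - √(d² - c²))`
then the algebraic connectivity `λ₂` strictly exceeds the smallest eigenvalue
`λ̄₁` of the grounded Laplacian (grounding any vertex `v`). -/
theorem grounded_eigenvalue_lt_algebraic_connectivity
    {N : ℕ} (G : SimpleGraph (Fin N)) (d : ℕ) (c : ℝ)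
    (hconn : G.Connected) (hreg : ∀ u, deg G u = d)
    (hc0 : 0 < c) (hcd : c ≤ (d : ℝ)) (hch : c ≤ cheeger G) (v : Fin N)
    (hN : (N : ℝ) - 1 > (d : ℝ) / ((d : ℝ) - Real.sqrt ((d : ℝ) ^ 2 - c ^ 2))) :
    eigVal (lap G) 1 > eigVal (ground (lap G) v) 0 := by
  classical
  have hlap : lap G = G.lapMatrix ℝ := by
    unfold lap
    congr!
  have hd0 : (0:ℝ) < d := lt_of_lt_of_le hc0 hcd
  have hsqlt : Real.sqrt ((d:ℝ)^2 - c^2) < d := by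
    have h1 : (d:ℝ)^2 - c^2 < (d:ℝ)^2 := by nlinarith
    calc Real.sqrt ((d:ℝ)^2 - c^2) < Real.sqrt ((d:ℝ)^2) :=
          Real.sqrt_lt_sqrt (by nlinarith) h1
      _ = d := Real.sqrt_sq (le_of_lt hd0)
  set β : ℝ := (d:ℝ) - Real.sqrt ((d:ℝ)^2 - c^2) with hβ
  have hβpos : 0 < β := by rw [hβ]; linarith
  have hdivnn : 0 ≤ (d:ℝ)/β := div_nonneg (by positivity) (le_of_lt hβpos)
  have hN1 : (1:ℝ) < N := by linarith
  have hN2 : 2 ≤ N := by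
    have : (1:ℕ) < N := by exact_mod_cast hN1
    omega
  have hdeg : ∀ u, G.degree u = d := by
    intro u
    rw [← hreg u]
    have h1 : G.degree u = (Finset.univ.filter fun w => G.Adj u w).card := by
      rw [← SimpleGraph.neighborFinset_eq_filter]
      rfl
    rw [h1]
    unfold deg
    congr!
  have hcut : ∀ X : Finset (Fin N), X.Nonempty → 2 * (X.card : ℝ) ≤ N →
      c * X.card ≤ (bdry G X : ℝ) := by
    intro X hXne hX2
    have hXpos : (0:ℝ) < X.card := by exact_mod_cast Finset.card_pos.mpr hXne
    have hle : cheeger G ≤ (bdry G X : ℝ) / X.card := by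
      unfold cheeger
      apply csInf_le
      · refine ⟨0, ?_⟩
        rintro r ⟨Y, hY, hY2, rfl⟩
        positivity
      · refine ⟨X, hXne, by linarith, ?_⟩
        unfold bdry
        congr!
    have h6 := hch.trans hle
    calc c * X.card ≤ ((bdry G X : ℝ)/X.card) * X.card :=
          mul_le_mul_of_nonneg_right h6 (le_of_lt hXpos)
      _ = (bdry G X : ℝ) := div_mul_cancel₀ _ (ne_of_gt hXpos)
  have hβlam : β ≤ eigVal (G.lapMatrix ℝ) 1 :=
    lap_second_ge G hconn hdeg hc0 hcd hcut hN2
  -- grounded part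
  have hM : (G.lapMatrix ℝ).IsHermitian := (SimpleGraph.posSemidef_lapMatrix ℝ G).1
  have hMg : (ground (G.lapMatrix ℝ) v).IsHermitian := ground_isHermitian hM v
  have hcardg : 0 < Fintype.card {i : Fin N // i ≠ v} := by
    rw [card_ne]
    omega
  have hones : (fun _ : {i : Fin N // i ≠ v} => (1:ℝ)) ⬝ᵥ (fun _ => (1:ℝ)) = (N:ℝ) - 1 := by
    rw [dotProduct]
    simp only [mul_one, Finset.sum_const, Finset.card_univ, nsmul_eq_mul]
    rw [card_ne]
    have : (1:ℕ) ≤ N := by omega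
    push_cast [this]
    ring
  have hray := eigVal_zero_rayleigh hMg hcardg (fun _ => (1:ℝ))
  rw [hones, ground_quad G hdeg v] at hray
  have hN1pos : (0:ℝ) < (N:ℝ) - 1 := by linarith
  have hg_le : eigVal (ground (G.lapMatrix ℝ) v) 0 ≤ (d:ℝ)/((N:ℝ)-1) :=
    (le_div_iff₀ hN1pos).mpr hray
  have hmid : (d:ℝ)/((N:ℝ)-1) < β := by
    rw [div_lt_iff₀ hN1pos]
    have h7 : (d:ℝ)/β < (N:ℝ) - 1 := hN
    have h8 : (d:ℝ) < ((N:ℝ) - 1) * β := (div_lt_iff₀ hβpos).mp h7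
    linarith
  rw [hlap]
  calc eigVal (ground (G.lapMatrix ℝ) v) 0 ≤ (d:ℝ)/((N:ℝ)-1) := hg_le
    _ < β := hmid
    _ ≤ eigVal (G.lapMatrix ℝ) 1 := hβlam
end

section
/- Let G be a simple graph on N ≥ 2 vertices with Laplacian L, let v be any vertex, and let L̄ be the grounded Laplacian obtained from L by deleting the row and column indexed by v. Then the smallest eigenvalue λ̄₁ of L̄ satisfies λ̄₁ ≤ deg(v) / (N − 1), where deg(v) is the degree of v. In particular, if every vertex of G has degree at most d, then λ̄₁ ≤ d/(N − 1). -/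
open Matrix

lemma eigVal_le_eigenvalues {n : Type*} [Fintype n] [DecidableEq n]
    {M : Matrix n n ℝ} (hM : M.IsHermitian) (hcard : 0 < Fintype.card n) (i : n) :
    eigVal M 0 ≤ hM.eigenvalues i := by
  rw [eigVal, dif_pos ⟨hM, hcard⟩]
  have h1 : ∀ k : Fin (Fintype.card n), (hM.eigenvalues₀ ∘ Tuple.sort hM.eigenvalues₀) ⟨0, hcard⟩
      ≤ hM.eigenvalues₀ k := by
    intro k
    have := Tuple.monotone_sort hM.eigenvalues₀
      (show (⟨0, hcard⟩ : Fin (Fintype.card n)) ≤ (Tuple.sort hM.eigenvalues₀).symm k from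
        Fin.mk_le_mk.mpr (Nat.zero_le _))
    simpa using this.trans_eq (by simp)
  exact h1 _

lemma eigVal_rayleigh {n : Type*} [Fintype n] [DecidableEq n]
    {M : Matrix n n ℝ} (hM : M.IsHermitian) (hcard : 0 < Fintype.card n) (x : n → ℝ) :
    eigVal M 0 * (x ⬝ᵥ x) ≤ x ⬝ᵥ (M *ᵥ x) := by
  set c := eigVal M 0 with hc
  set U := (hM.eigenvectorUnitary : Matrix n n ℝ) with hU
  have hUU : U * star U = 1 := (Matrix.mem_unitaryGroup_iff).mp hM.eigenvectorUnitary.2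
  have hdiag : Matrix.PosSemidef (diagonal (fun i => hM.eigenvalues i - c)) :=
    posSemidef_diagonal_iff.mpr fun i => sub_nonneg.2 (eigVal_le_eigenvalues hM hcard i)
  have h1 : M - c • 1 = U * diagonal (fun i => hM.eigenvalues i - c) * Uᴴ := by
    have hD : diagonal (fun i => hM.eigenvalues i - c)
        = diagonal (RCLike.ofReal ∘ hM.eigenvalues) - c • 1 := by
      ext i j
      rcases eq_or_ne i j with rfl | h
      · simp
      · simp [Matrix.diagonal_apply_ne _ h, Matrix.one_apply_ne h]
    rw [hD, Matrix.mul_sub, Matrix.sub_mul, ← Matrix.star_eq_conjTranspose,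
      show U * diagonal (RCLike.ofReal ∘ hM.eigenvalues) * star U = M from hM.spectral_theorem.symm]
    congr 1
    rw [Matrix.mul_smul, Matrix.mul_one, Matrix.smul_mul, hUU]
  have hpsd : Matrix.PosSemidef (M - c • 1) := h1 ▸ hdiag.mul_mul_conjTranspose_same U
  have h2 := hpsd.dotProduct_mulVec_nonneg x
  simp only [star_trivial, RCLike.re_to_real] at h2
  have h3 : x ⬝ᵥ ((M - c • 1) *ᵥ x) = x ⬝ᵥ (M *ᵥ x) - c * (x ⬝ᵥ x) := by
    rw [Matrix.sub_mulVec, dotProduct_sub, Matrix.smul_mulVec, Matrix.one_mulVec,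
      dotProduct_smul, smul_eq_mul]
  rw [h3] at h2
  linarith

/-- For a simple graph on `N ≥ 2` vertices, the smallest eigenvalue
of the grounded Laplacian (grounding a vertex `v`) is at most `deg(v)/(N-1)`;
in particular, if every vertex has degree at most `d`, it is at most `d/(N-1)`. -/
theorem grounded_eigenvalue_le_degree_div
    {N : ℕ} (hN : 2 ≤ N) (G : SimpleGraph (Fin N)) (v : Fin N) :
    eigVal (ground (lap G) v) 0 ≤ (deg G v : ℝ) / ((N : ℝ) - 1) ∧
    ∀ d : ℕ, (∀ u, deg G u ≤ d) →
      eigVal (ground (lap G) v) 0 ≤ (d : ℝ) / ((N : ℝ) - 1) := by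
  classical
  have hN1 : (0 : ℝ) < (N : ℝ) - 1 := by
    have : (2 : ℝ) ≤ (N : ℝ) := by exact_mod_cast hN
    linarith
  -- symmetry of lap
  have hsym : ∀ i j, lap G i j = lap G j i := by
    intro i j
    unfold lap
    conv_lhs => rw [← SimpleGraph.isSymm_lapMatrix G (R := ℝ)]
    exact Matrix.transpose_apply _ _ _
  have hM : (ground (lap G) v).IsHermitian := by
    ext i j
    simp only [conjTranspose_apply, star_trivial, ground, submatrix_apply]
    exact hsym _ _
  -- card
  have hcardn : Fintype.card {i : Fin N // i ≠ v} = N - 1 := by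
    rw [Fintype.card_subtype_compl, Fintype.card_fin, Fintype.card_subtype_eq]
  have hcard : 0 < Fintype.card {i : Fin N // i ≠ v} := by omega
  -- row sums of lap are zero
  have hrow : ∀ i, ∑ j, lap G i j = 0 := by
    intro i
    have h := congrFun (SimpleGraph.lapMatrix_mulVec_const_eq_zero (R := ℝ) G) i
    unfold lap
    simpa [Matrix.mulVec, dotProduct] using h
  -- diagonal entry
  have hvv : lap G v v = (deg G v : ℝ) := by
    unfold lap deg
    simp [SimpleGraph.lapMatrix, SimpleGraph.degMatrix, SimpleGraph.degree,
      SimpleGraph.neighborFinset_eq_filter]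
  -- quadratic form with all-ones vector
  have key := eigVal_rayleigh hM hcard (fun _ => (1 : ℝ))
  have hxx : ((fun _ => (1 : ℝ)) : {i : Fin N // i ≠ v} → ℝ) ⬝ᵥ (fun _ => (1 : ℝ)) = (N : ℝ) - 1 := by
    simp only [dotProduct, mul_one, Finset.sum_const, Finset.card_univ, nsmul_eq_mul, mul_one]
    rw [hcardn]
    have : (1 : ℕ) ≤ N := by omega
    push_cast [Nat.cast_sub this]
    ring
  have hsub : ∀ f : Fin N → ℝ, ∑ i : {i : Fin N // i ≠ v}, f i.1 = ∑ i ∈ Finset.univ.erase v, f i := by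
    intro f
    exact (Finset.sum_subtype (Finset.univ.erase v) (fun x => by simp) f).symm
  have hquad : ((fun _ => (1 : ℝ)) : {i : Fin N // i ≠ v} → ℝ) ⬝ᵥ (ground (lap G) v *ᵥ (fun _ => (1 : ℝ))) = (deg G v : ℝ) := by
    simp only [dotProduct, Matrix.mulVec, dotProduct, mul_one, one_mul, ground, submatrix_apply]
    rw [hsub (fun i => ∑ j : {i : Fin N // i ≠ v}, lap G i j.1)]
    have hinner : ∀ i, ∑ j : {j : Fin N // j ≠ v}, lap G i j.1 = - lap G i v := by
      intro i
      rw [hsub (fun j => lap G i j), Finset.sum_erase_eq_sub (Finset.mem_univ v), hrow]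
      ring
    rw [Finset.sum_congr rfl (fun i _ => hinner i), Finset.sum_neg_distrib,
      Finset.sum_erase_eq_sub (Finset.mem_univ v)]
    have hcol : ∑ i, lap G i v = 0 := by
      rw [Finset.sum_congr rfl fun i _ => hsym i v]
      exact hrow v
    rw [hcol, hvv]
    ring
  rw [hxx, hquad] at key
  have hmain : eigVal (ground (lap G) v) 0 ≤ (deg G v : ℝ) / ((N : ℝ) - 1) := by
    rw [le_div_iff₀ hN1]
    exact key
  refine ⟨hmain, fun d hd => hmain.trans ?_⟩
  gcongr
  exact_mod_cast hd v
end

section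
/- Let A ∈ ℝ^{n×n}, let B ∈ ℝ^{n×1} be nonzero, let 0 < ζ ≤ 1, and let P ∈ ℝ^{n×n} be symmetric positive definite satisfying the modified algebraic Riccati inequality P − AᵀPA + (1 − ζ²)·(AᵀPBBᵀPA)/(BᵀPB) ≻ 0 (positive definite). Let s > 0 and define the gain K = (2/s)·(BᵀPA)/(BᵀPB) ∈ ℝ^{1×n}. Then for every real number μ with (1 − ζ)·s/2 ≤ μ ≤ (1 + ζ)·s/2, the matrix A − μBK is Schur, i.e., its spectral radius is strictly less than 1. -/
open Matrix
open scoped ComplexOrder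

/-- A real square matrix is Schur (stable) if all of its complex eigenvalues lie
strictly inside the unit circle. -/
def IsSchur {n : Type*} [Fintype n] [DecidableEq n] (M : Matrix n n ℝ) : Prop :=
  ∀ z ∈ spectrum ℂ (M.map Complex.ofReal), ‖z‖ < 1

lemma posSemidef_smul_real {m : ℕ} {M : Matrix (Fin m) (Fin m) ℝ}
    (hM : M.PosSemidef) {t : ℝ} (ht : 0 ≤ t) : (t • M).PosSemidef := by
  refine PosSemidef.of_dotProduct_mulVec_nonneg ?_ (fun x => ?_)
  · unfold Matrix.IsHermitian
    rw [conjTranspose_smul, hM.1]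
    simp
  · simp only [smul_mulVec, dotProduct_smul, smul_eq_mul]
    exact mul_nonneg ht (hM.dotProduct_mulVec_nonneg x)

lemma one_by_one_eq {X : Matrix (Fin 1) (Fin 1) ℝ} : X = X 0 0 • (1 : Matrix (Fin 1) (Fin 1) ℝ) := by
  ext i j
  fin_cases i; fin_cases j
  simp
lemma posDef_map_complex {m : ℕ} {P : Matrix (Fin m) (Fin m) ℝ} (hP : P.PosDef) :
    (P.map Complex.ofReal).PosDef := by
  have hsym : ∀ i j, P j i = P i j := fun i j => hP.1.apply i j
  refine PosDef.of_dotProduct_mulVec_pos ?_ (fun v hv => ?_)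
  · ext i j
    simp [conjTranspose_apply, hsym i j]
  · set q : ℂ := star v ⬝ᵥ (P.map Complex.ofReal) *ᵥ v with hq
    set x : Fin m → ℝ := fun i => (v i).re with hx
    set y : Fin m → ℝ := fun i => (v i).im with hy
    have hre : q.re = x ⬝ᵥ P *ᵥ x + y ⬝ᵥ P *ᵥ y := by
      simp only [hq, dotProduct, mulVec, Pi.star_apply, map_apply, Finset.mul_sum,
        Complex.re_sum]
      rw [← Finset.sum_add_distrib]
      refine Finset.sum_congr rfl fun i _ => ?_
      rw [← Finset.sum_add_distrib]
      refine Finset.sum_congr rfl fun j _ => ?_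
      simp only [Complex.mul_re, Complex.mul_im, Complex.star_def, Complex.conj_re,
        Complex.conj_im, Complex.ofReal_re, Complex.ofReal_im, hx, hy]
      ring
    have him : q.im = 0 := by
      have h1 : q.im = ∑ i, ∑ j, P i j * (x i * y j - y i * x j) := by
        simp only [hq, dotProduct, mulVec, Pi.star_apply, map_apply, Finset.mul_sum,
          Complex.im_sum]
        refine Finset.sum_congr rfl fun i _ => ?_
        refine Finset.sum_congr rfl fun j _ => ?_
        simp only [Complex.mul_re, Complex.mul_im, Complex.star_def, Complex.conj_re,
          Complex.conj_im, Complex.ofReal_re, Complex.ofReal_im, hx, hy]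
        ring
      have hc : (∑ i, ∑ j, P i j * (x i * y j - y i * x j))
          = ∑ i, ∑ j, -(P i j * (x i * y j - y i * x j)) := by
        rw [Finset.sum_comm]
        refine Finset.sum_congr rfl fun i _ => Finset.sum_congr rfl fun j _ => ?_
        rw [hsym i j]
        ring
      rw [Finset.sum_congr rfl fun i _ => Finset.sum_neg_distrib _, Finset.sum_neg_distrib] at hc
      rw [h1]
      linarith
    have hxy : x ≠ 0 ∨ y ≠ 0 := by
      by_contra h
      push_neg at h
      apply hv
      funext i
      have h1 := congrFun h.1 i
      have h2 := congrFun h.2 i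
      simp [hx, hy] at h1 h2
      exact Complex.ext h1 h2
    have hpos : 0 < q.re := by
      rw [hre]
      rcases hxy with h | h
      · have := hP.dotProduct_mulVec_pos h
        have h2 := hP.posSemidef.dotProduct_mulVec_nonneg y
        simp at this h2 ⊢
        linarith
      · have := hP.dotProduct_mulVec_pos h
        have h2 := hP.posSemidef.dotProduct_mulVec_nonneg x
        simp at this h2 ⊢
        linarith
    have hq' : q = ((q.re : ℝ) : ℂ) := Complex.ext (by simp) (by simp [him])
    rw [hq']
    exact Complex.zero_lt_real.mpr hpos

lemma isSchur_of_lyapunov {m : ℕ} {M P : Matrix (Fin m) (Fin m) ℝ}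
    (hP : P.PosDef) (hL : (P - Mᵀ * P * M).PosDef) : IsSchur M := by
  intro z hz
  set Mc := M.map Complex.ofReal with hMc
  set Pc := P.map Complex.ofReal with hPc
  -- get an eigenvector
  have hz' : z ∈ spectrum ℂ (Matrix.toLin' Mc) := by
    have := AlgEquiv.spectrum_eq (Matrix.toLinAlgEquiv' : Matrix (Fin m) (Fin m) ℂ ≃ₐ[ℂ] _) Mc
    rw [show Matrix.toLin' Mc = Matrix.toLinAlgEquiv' Mc from rfl, this]
    exact hz
  obtain ⟨v, hv⟩ := (Module.End.hasEigenvalue_iff_mem_spectrum.mpr hz').exists_hasEigenvector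
  have hv0 : v ≠ 0 := hv.right
  have hMv : Mc *ᵥ v = z • v := by
    rw [← Matrix.toLin'_apply]; exact hv.apply_eq_smul
  -- complexified matrices
  have hPcd := posDef_map_complex hP
  have hLcd := posDef_map_complex hL
  have hmap : (P - Mᵀ * P * M).map Complex.ofReal = Pc - Mcᵀ * Pc * Mc := by
    have h1 : (P - Mᵀ * P * M).map Complex.ofReal
        = P.map Complex.ofReal - (Mᵀ * P * M).map Complex.ofReal :=
      Matrix.map_sub Complex.ofReal (fun a b => Complex.ofReal_sub a b) _ _
    have h2 : (Mᵀ * P * M).map Complex.ofReal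
        = (Mᵀ.map Complex.ofReal) * Pc * Mc := by
      rw [show (Complex.ofReal : ℝ → ℂ) = ⇑Complex.ofRealHom from rfl]
      rw [Matrix.map_mul, Matrix.map_mul]
      rfl
    rw [h1, h2, transpose_map]
  have hMH : Mcᴴ = Mcᵀ := by
    ext i j
    simp [hMc, conjTranspose_apply]
  set q : ℂ := star v ⬝ᵥ Pc *ᵥ v with hqdef
  have hq := hPcd.dotProduct_mulVec_pos hv0
  have hkey : star v ⬝ᵥ (Pc - Mcᵀ * Pc * Mc) *ᵥ v
      = (1 - (Complex.normSq z : ℂ)) * q := by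
    rw [sub_mulVec, dotProduct_sub]
    have : star v ⬝ᵥ (Mcᵀ * Pc * Mc) *ᵥ v = (Complex.normSq z : ℂ) * q := by
      rw [Matrix.mul_assoc, ← mulVec_mulVec, dotProduct_mulVec, vecMul_transpose]
      have hstar : Mc *ᵥ star v = star (Mc *ᵥ v) := by
        rw [star_mulVec, hMH, vecMul_transpose]
      rw [hstar, hMv, ← mulVec_mulVec, hMv, star_smul, smul_dotProduct, mulVec_smul,
        dotProduct_smul, smul_eq_mul, smul_eq_mul, ← mul_assoc]
      congr 1
      rw [Complex.star_def, mul_comm, Complex.mul_conj]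
    rw [this]
    ring
  have hL2 := hLcd.dotProduct_mulVec_pos hv0
  rw [hmap, hkey] at hL2
  -- extract real parts
  have hqre : 0 < q.re := (Complex.lt_def.mp hq).1
  have hqim : q.im = 0 := by
    have := (Complex.lt_def.mp hq).2; simpa using this.symm
  have h3 : 0 < ((1 - (Complex.normSq z : ℂ)) * q).re := (Complex.lt_def.mp hL2).1
  have h4 : ((1 - (Complex.normSq z : ℂ)) * q).re = (1 - Complex.normSq z) * q.re := by
    simp [Complex.mul_re, Complex.sub_im, hqim]
  rw [h4] at h3
  have h5 : Complex.normSq z < 1 := by nlinarith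
  have h6 : ‖z‖ ^ 2 = Complex.normSq z := by
    exact Complex.sq_norm z
  nlinarith [norm_nonneg z]

/-- Let `P ≻ 0` be symmetric satisfying the modified algebraic
Riccati inequality `P - AᵀPA + (1 - ζ²)·(AᵀPBBᵀPA)/(BᵀPB) ≻ 0` with `0 < ζ ≤ 1`,
let `s > 0`, and let `K = (2/s)·(BᵀPA)/(BᵀPB)`. Then for every
`(1-ζ)s/2 ≤ μ ≤ (1+ζ)s/2`, the matrix `A - μBK` is Schur. -/
theorem schur_of_modified_riccati
    {n : ℕ} (A : Matrix (Fin n) (Fin n) ℝ) (B : Matrix (Fin n) (Fin 1) ℝ) (hB : B ≠ 0)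
    (ζ : ℝ) (hζ0 : 0 < ζ) (hζ1 : ζ ≤ 1)
    (P : Matrix (Fin n) (Fin n) ℝ) (hP : P.PosDef)
    (hRic : (P - Aᵀ * P * A +
        ((1 - ζ ^ 2) / ((Bᵀ * P * B) 0 0)) • (Aᵀ * P * B * (Bᵀ * P * A))).PosDef)
    (s : ℝ) (hs : 0 < s)
    (K : Matrix (Fin 1) (Fin n) ℝ)
    (hK : K = (2 / (s * ((Bᵀ * P * B) 0 0))) • (Bᵀ * P * A))
    (μ : ℝ) (hμl : (1 - ζ) * s / 2 ≤ μ) (hμu : μ ≤ (1 + ζ) * s / 2) :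
    IsSchur (A - μ • (B * K)) := by
  set β : ℝ := (Bᵀ * P * B) 0 0 with hβdef
  have hPT : Pᵀ = P := by
    have := hP.1
    ext i j
    exact hP.1.apply i j
  -- β is positive
  set b : Fin n → ℝ := fun i => B i 0 with hbdef
  have hb0 : b ≠ 0 := by
    intro h
    apply hB
    ext i j
    have hj : j = 0 := Subsingleton.elim _ _
    have := congrFun h i
    simp [hbdef] at this
    simp [hj, this]
  have hβb : β = b ⬝ᵥ P *ᵥ b := by
    simp [hβdef, Matrix.mul_apply, Matrix.mulVec, dotProduct, hbdef,
      Finset.mul_sum, Finset.sum_mul, transpose_apply]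
    rw [Finset.sum_comm]
    exact Finset.sum_congr rfl fun i _ => Finset.sum_congr rfl fun j _ => by ring
  have hβpos : 0 < β := by
    rw [hβb]
    have := hP.dotProduct_mulVec_pos hb0
    simpa using this
  have hβ' : β ≠ 0 := ne_of_gt hβpos
  set c : ℝ := μ * (2 / (s * β)) with hc
  have hM' : A - μ • (B * K) = A - c • (B * (Bᵀ * (P * A))) := by
    rw [hK, Matrix.mul_smul, smul_smul, Matrix.mul_assoc]
  have hBB : Bᵀ * P * B = β • (1 : Matrix (Fin 1) (Fin 1) ℝ) := by
    rw [hβdef]; exact one_by_one_eq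
  have hmid : Bᵀ * (P * (B * (Bᵀ * (P * A)))) = β • (Bᵀ * (P * A)) := by
    rw [← Matrix.mul_assoc, ← Matrix.mul_assoc, hBB, Matrix.smul_mul, Matrix.one_mul]
  -- the key expansion
  have hexp : P - (A - μ • (B * K))ᵀ * P * (A - μ • (B * K)) =
      (P - Aᵀ * P * A + ((1 - ζ ^ 2) / β) • (Aᵀ * P * B * (Bᵀ * P * A))) +
        (2 * c - c ^ 2 * β - (1 - ζ ^ 2) / β) • (Aᵀ * P * B * (Bᵀ * P * A)) := by
    rw [hM']
    simp only [transpose_sub, transpose_smul, transpose_mul, transpose_transpose, hPT,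
      Matrix.sub_mul, Matrix.mul_sub, Matrix.smul_mul, Matrix.mul_smul, smul_smul,
      smul_sub, Matrix.mul_assoc, hmid]
    module
  -- nonnegativity of the extra coefficient
  have ht : 0 ≤ 2 * c - c ^ 2 * β - (1 - ζ ^ 2) / β := by
    have hs' : s ≠ 0 := ne_of_gt hs
    have hc' : c = (2 * μ / s) / β := by rw [hc]; field_simp
    have heq : 2 * ((2 * μ / s) / β) - ((2 * μ / s) / β) ^ 2 * β - (1 - ζ ^ 2) / β
        = (ζ ^ 2 - (1 - 2 * μ / s) ^ 2) / β := by
      field_simp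
      ring
    rw [hc', heq]
    apply div_nonneg _ (le_of_lt hβpos)
    have hg1 : 1 - ζ ≤ 2 * μ / s := by rw [le_div_iff₀ hs]; linarith
    have hg2 : 2 * μ / s ≤ 1 + ζ := by rw [div_le_iff₀ hs]; linarith
    nlinarith
  -- positive semidefiniteness of the rank-one term
  have hQ : (Aᵀ * P * B * (Bᵀ * P * A)).PosSemidef := by
    have h1 : (Bᵀ * P * A)ᴴ = Aᵀ * P * B := by
      have h2 : (Bᵀ * P * A)ᴴ = (Bᵀ * P * A)ᵀ := by
        ext i j
        simp [conjTranspose_apply]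
      rw [h2, transpose_mul, transpose_mul, transpose_transpose, hPT, Matrix.mul_assoc]
    have := posSemidef_conjTranspose_mul_self (Bᵀ * P * A)
    rwa [h1] at this
  have hL : (P - (A - μ • (B * K))ᵀ * P * (A - μ • (B * K))).PosDef := by
    rw [hexp]
    exact hRic.add_posSemidef (posSemidef_smul_real hQ ht)
  exact isSchur_of_lyapunov hP hL
end

section
/- Let M be a real symmetric m×m matrix with (real) eigenvalues μ₁, …, μ_m (counted with multiplicity), let A, F ∈ ℝ^{n×n}, and let I_m denote the m×m identity. Then the multiset of complex eigenvalues of the block matrix I_m ⊗ A − M ⊗ F (Kronecker product) equals the union over i = 1, …, m of the multisets of eigenvalues of A − μ_i F. In particular, I_m ⊗ A − M ⊗ F is Schur (spectral radius < 1) if and only if A − μ_i F is Schur for every i. -/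
open Matrix Kronecker Polynomial

section AuxLemmas

variable {k : Type*} [Fintype k] [DecidableEq k] {R : Type*} [CommRing R]

lemma aux_charpoly_conj (U B V : Matrix k k R) (hUV : U * V = 1) :
    (U * B * V).charpoly = B.charpoly := by
  have hCUV : (C : R →+* R[X]).mapMatrix U * (C : R →+* R[X]).mapMatrix V = 1 := by
    rw [← _root_.map_mul, hUV, _root_.map_one]
  have hc : charmatrix (U * B * V) =
      (C : R →+* R[X]).mapMatrix U * charmatrix B * (C : R →+* R[X]).mapMatrix V := by
    unfold charmatrix
    rw [Matrix.mul_sub, Matrix.sub_mul, ← _root_.map_mul, ← _root_.map_mul]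
    congr 1
    have hdiag : (diagonal fun _ : k => (X : R[X])) = (X : R[X]) • 1 := by
      rw [smul_eq_diagonal_mul, mul_one]
    rw [scalar_apply, hdiag, mul_smul_comm, mul_one, smul_mul_assoc, hCUV]
  have hd : ((C : R →+* R[X]).mapMatrix V * (C : R →+* R[X]).mapMatrix U).det = 1 := by
    rw [det_mul, mul_comm, ← det_mul, hCUV, det_one]
  rw [Matrix.charpoly, Matrix.charpoly, hc, det_mul, det_mul, mul_comm, ← mul_assoc,
    ← det_mul, hd, one_mul]

lemma aux_charpoly_diagonal (d : k → R) :
    (diagonal d).charpoly = ∏ i, (X - C (d i)) := by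
  rw [Matrix.charpoly]
  have : charmatrix (diagonal d) = diagonal fun i => X - C (d i) := by
    ext i j
    rcases eq_or_ne i j with rfl | h
    · simp [charmatrix_apply]
    · simp [charmatrix_apply_ne _ _ _ h, diagonal_apply_ne _ h]
  rw [this, det_diagonal]

lemma aux_charpoly_blockDiagonal {l : Type*} [Fintype l] [DecidableEq l]
    (g : k → Matrix l l R) :
    (blockDiagonal g).charpoly = ∏ i, (g i).charpoly := by
  have h : charmatrix (blockDiagonal g) = blockDiagonal fun i => charmatrix (g i) := by
    ext ⟨a, i⟩ ⟨b, j⟩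
    rcases eq_or_ne i j with rfl | h
    · rcases eq_or_ne a b with rfl | hab
      · simp [charmatrix_apply, blockDiagonal_apply]
      · simp [charmatrix_apply, blockDiagonal_apply, diagonal_apply, hab, Prod.ext_iff]
    · simp [charmatrix_apply, blockDiagonal_apply, diagonal_apply, h, Prod.ext_iff]
  rw [Matrix.charpoly, h, det_blockDiagonal]
  simp only [Matrix.charpoly]

lemma aux_mem_spectrum_iff (B : Matrix k k ℂ) (z : ℂ) :
    z ∈ spectrum ℂ B ↔ z ∈ B.charpoly.roots := by
  rw [mem_roots B.charpoly_monic.ne_zero, IsRoot, spectrum.mem_iff]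
  have h : eval z B.charpoly = (algebraMap ℂ (Matrix k k ℂ) z - B).det := by
    rw [Matrix.charpoly, ← coe_evalRingHom, RingHom.map_det]
    congr 1
    ext i j
    rcases eq_or_ne i j with rfl | h
    · simp [charmatrix_apply, Matrix.algebraMap_eq_diagonal]
    · simp [charmatrix_apply_ne _ _ _ h, Matrix.algebraMap_eq_diagonal, diagonal_apply_ne _ h]
  rw [h, Matrix.isUnit_iff_isUnit_det, isUnit_iff_ne_zero, not_ne_iff]

lemma aux_roots_prod_X_sub_C {m : ℕ} (f : Fin m → ℂ) :
    (∏ i, (X - C (f i))).roots = Finset.univ.val.map f := by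
  rw [Finset.prod_eq_multiset_prod]
  have h : (fun i => X - C (f i)) = (fun a : ℂ => X - C a) ∘ f := rfl
  rw [h, ← Multiset.map_map, roots_multiset_prod_X_sub_C]

end AuxLemmas

lemma aux_isSchur_iff {k : Type*} [Fintype k] [DecidableEq k] (B : Matrix k k ℝ) :
    IsSchur B ↔ ∀ z ∈ ((B.map Complex.ofReal).charpoly).roots, ‖z‖ < 1 := by
  unfold IsSchur
  constructor
  · intro h z hz
    exact h z ((aux_mem_spectrum_iff _ z).mpr hz)
  · intro h z hz
    exact h z ((aux_mem_spectrum_iff _ z).mp hz)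

/-- Let `M` be a real symmetric `m × m` matrix with eigenvalues
`μ₁, …, μ_m` (with multiplicity, encoded via its characteristic polynomial), and
let `A, F` be real `n × n` matrices. Then the multiset of complex eigenvalues of
`I_m ⊗ A - M ⊗ F` is the union over `i` of the multisets of eigenvalues of
`A - μ_i F`; in particular `I_m ⊗ A - M ⊗ F` is Schur iff each `A - μ_i F` is. -/
theorem kronecker_spectrum_decomposition
    {m n : ℕ} (M : Matrix (Fin m) (Fin m) ℝ) (hM : M.IsSymm)
    (μ : Fin m → ℝ) (hμ : M.charpoly = ∏ i, (X - C (μ i)))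
    (A F : Matrix (Fin n) (Fin n) ℝ) :
    ((((1 : Matrix (Fin m) (Fin m) ℝ) ⊗ₖ A - M ⊗ₖ F).map Complex.ofReal).charpoly.roots =
      ∑ i : Fin m, ((A - μ i • F).map Complex.ofReal).charpoly.roots) ∧
    (IsSchur ((1 : Matrix (Fin m) (Fin m) ℝ) ⊗ₖ A - M ⊗ₖ F) ↔
      ∀ i, IsSchur (A - μ i • F)) := by
  classical
  set Mc : Matrix (Fin m) (Fin m) ℂ := M.map Complex.ofReal with hMcdef
  set Ac : Matrix (Fin n) (Fin n) ℂ := A.map Complex.ofReal with hAcdef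
  set Fc : Matrix (Fin n) (Fin n) ℂ := F.map Complex.ofReal with hFcdef
  -- Hermitian
  have hMc : Mc.IsHermitian := by
    ext i j
    have hsymm : M j i = M i j := congrFun (congrFun hM i) j
    simp [hMcdef, Matrix.conjTranspose_apply, Matrix.map_apply, Complex.conj_ofReal, hsymm]
  set ev : Fin m → ℝ := hMc.eigenvalues with hevdef
  set U : Matrix (Fin m) (Fin m) ℂ := (hMc.eigenvectorUnitary : Matrix (Fin m) (Fin m) ℂ)
    with hUdef
  set D : Matrix (Fin m) (Fin m) ℂ := diagonal (fun i => (ev i : ℂ)) with hDdef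
  have hU1 : U * star U = 1 := (Matrix.mem_unitaryGroup_iff).mp hMc.eigenvectorUnitary.2
  have hspec : Mc = U * D * star U := by
    have := hMc.spectral_theorem
    convert this using 2
    rw [Unitary.conjStarAlgAut_apply]
    rfl
  -- charpoly of Mc two ways
  have hcp1 : Mc.charpoly = ∏ i, (X - C ((μ i : ℂ))) := by
    have : Mc = M.map ⇑Complex.ofRealHom := rfl
    rw [this, Matrix.charpoly_map, hμ]
    simp [Polynomial.map_prod, Polynomial.map_sub]
  have hcp2 : Mc.charpoly = ∏ i, (X - C ((ev i : ℂ))) := by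
    conv_lhs => rw [hspec]
    rw [aux_charpoly_conj _ _ _ hU1, hDdef, aux_charpoly_diagonal]
  have hms : (Finset.univ.val.map fun i => (μ i : ℂ))
      = Finset.univ.val.map fun i => (ev i : ℂ) := by
    rw [← aux_roots_prod_X_sub_C (fun i => (μ i : ℂ)), ← aux_roots_prod_X_sub_C
      (fun i => (ev i : ℂ)), ← hcp1, ← hcp2]
  have hmsR : Finset.univ.val.map μ = Finset.univ.val.map ev := by
    apply Multiset.map_injective Complex.ofReal_injective
    rw [Multiset.map_map, Multiset.map_map]
    exact hms
  -- the big matrix over ℂ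
  have hNc : ((1 : Matrix (Fin m) (Fin m) ℝ) ⊗ₖ A - M ⊗ₖ F).map Complex.ofReal
      = (1 : Matrix (Fin m) (Fin m) ℂ) ⊗ₖ Ac - Mc ⊗ₖ Fc := by
    ext ⟨i, p⟩ ⟨j, q⟩
    simp [Matrix.map_apply, Matrix.sub_apply, Matrix.kroneckerMap_apply, Matrix.one_apply,
      apply_ite Complex.ofReal, hMcdef, hAcdef, hFcdef]
  -- similarity
  have e1 : (U ⊗ₖ (1 : Matrix (Fin n) (Fin n) ℂ))
        * ((1 : Matrix (Fin m) (Fin m) ℂ) ⊗ₖ Ac)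
        * ((star U) ⊗ₖ (1 : Matrix (Fin n) (Fin n) ℂ))
      = (1 : Matrix (Fin m) (Fin m) ℂ) ⊗ₖ Ac := by
    rw [← mul_kronecker_mul, ← mul_kronecker_mul]
    simp only [Matrix.mul_one, Matrix.one_mul]
    rw [hU1]
  have e2 : (U ⊗ₖ (1 : Matrix (Fin n) (Fin n) ℂ))
        * (D ⊗ₖ Fc)
        * ((star U) ⊗ₖ (1 : Matrix (Fin n) (Fin n) ℂ))
      = Mc ⊗ₖ Fc := by
    rw [← mul_kronecker_mul, ← mul_kronecker_mul]
    simp only [Matrix.mul_one, Matrix.one_mul]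
    rw [← hspec]
  have hsim : (1 : Matrix (Fin m) (Fin m) ℂ) ⊗ₖ Ac - Mc ⊗ₖ Fc
      = (U ⊗ₖ (1 : Matrix (Fin n) (Fin n) ℂ))
        * ((1 : Matrix (Fin m) (Fin m) ℂ) ⊗ₖ Ac - D ⊗ₖ Fc)
        * ((star U) ⊗ₖ (1 : Matrix (Fin n) (Fin n) ℂ)) := by
    rw [Matrix.mul_sub, Matrix.sub_mul, e1, e2]
  have hUk1 : (U ⊗ₖ (1 : Matrix (Fin n) (Fin n) ℂ))
      * ((star U) ⊗ₖ (1 : Matrix (Fin n) (Fin n) ℂ)) = 1 := by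
    rw [← mul_kronecker_mul, hU1]
    simp only [Matrix.mul_one]
    exact one_kronecker_one
  -- block diagonal structure
  have hblock : (1 : Matrix (Fin m) (Fin m) ℂ) ⊗ₖ Ac - D ⊗ₖ Fc
      = (Matrix.reindex (Equiv.prodComm (Fin n) (Fin m)) (Equiv.prodComm (Fin n) (Fin m))
          (blockDiagonal fun i => Ac - (ev i : ℂ) • Fc)) := by
    ext ⟨i, p⟩ ⟨j, q⟩
    rcases eq_or_ne i j with rfl | h
    · simp [Matrix.sub_apply, Matrix.kroneckerMap_apply, Matrix.one_apply, hDdef,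
        blockDiagonal_apply, diagonal_apply]
    · simp [Matrix.sub_apply, Matrix.kroneckerMap_apply, Matrix.one_apply, hDdef,
        blockDiagonal_apply, diagonal_apply, h, Ne.symm h]
  -- charpoly of the big matrix
  have hprodswap : ∏ i, (Ac - (ev i : ℂ) • Fc).charpoly
      = ∏ i, (Ac - (μ i : ℂ) • Fc).charpoly := by
    have key : ∀ g : Fin m → ℝ, ∏ i, (Ac - (g i : ℂ) • Fc).charpoly
        = ((Finset.univ.val.map g).map
            (fun t : ℝ => (Ac - (t : ℂ) • Fc).charpoly)).prod := by
      intro g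
      rw [Finset.prod_eq_multiset_prod, Multiset.map_map]
      rfl
    rw [key, key, hmsR]
  have hmapi : ∀ i, (A - μ i • F).map Complex.ofReal = Ac - (μ i : ℂ) • Fc := by
    intro i
    ext p q
    simp [Matrix.map_apply, Matrix.sub_apply, Matrix.smul_apply, hAcdef, hFcdef]
  have hkey : (((1 : Matrix (Fin m) (Fin m) ℝ) ⊗ₖ A - M ⊗ₖ F).map Complex.ofReal).charpoly
      = ∏ i, ((A - μ i • F).map Complex.ofReal).charpoly := by
    rw [hNc, hsim, aux_charpoly_conj _ _ _ hUk1, hblock, Matrix.charpoly_reindex,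
      aux_charpoly_blockDiagonal, hprodswap]
    exact Finset.prod_congr rfl fun i _ => by rw [hmapi i]
  -- roots statement
  have hroots : (((1 : Matrix (Fin m) (Fin m) ℝ) ⊗ₖ A - M ⊗ₖ F).map Complex.ofReal).charpoly.roots
      = ∑ i : Fin m, ((A - μ i • F).map Complex.ofReal).charpoly.roots := by
    rw [hkey, Polynomial.roots_prod]
    · rfl
    · exact Finset.prod_ne_zero_iff.mpr fun i _ => (Matrix.charpoly_monic _).ne_zero
  refine ⟨hroots, ?_⟩
  rw [aux_isSchur_iff, hroots]
  constructor
  · intro h i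
    rw [aux_isSchur_iff]
    intro z hz
    exact h z (Multiset.mem_sum.mpr ⟨i, Finset.mem_univ i, hz⟩)
  · intro h z hz
    obtain ⟨i, -, hzi⟩ := Multiset.mem_sum.mp hz
    exact (aux_isSchur_iff _).mp (h i) z hzi
end
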